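/- arXiv:1904.03118 — 13 statements merged into one kernel-verified Lean document; each statement's English description precedes it below -/
import Mathlib

section
/- Let V be a real separable Hilbert space, (T(t))_{t≥0} a semigroup of bounded linear operators on V (T(0) = Id and T(t+s) = T(t)T(s) for all s,t ≥ 0), and (ν_t)_{t≥0} a skew-convolution semigroup with respect to (T(t))_{t≥0}, i.e. ν_{t+s} = T_tν_s ∗ ν_t for all s,t ≥ 0. If ν_t converges weakly to a Borel probability measure ν as t → ∞, then ν is a stationary measure, i.e. ν = T_tν ∗ ν_t for all t ≥ 0. -/
open MeasureTheory Filter Topology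
open scoped MeasureTheory

/-- If `(ν_t)` is a skew-convolution semigroup with respect to the semigroup `(T(t))` and
`ν_t` converges weakly to `ν` as `t → ∞`, then `ν` is a stationary measure:
`ν = T_tν ∗ ν_t` for all `t ≥ 0`. -/
theorem stmt4
    {V : Type*}
    [NormedAddCommGroup V] [InnerProductSpace ℝ V] [CompleteSpace V] [SecondCountableTopology V]
    [MeasurableSpace V] [BorelSpace V]
    (T : ℝ → V →L[ℝ] V)
    (hT0 : T 0 = ContinuousLinearMap.id ℝ V)
    (hTadd : ∀ s t : ℝ, 0 ≤ s → 0 ≤ t → T (s + t) = (T s).comp (T t))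
    (ν : ℝ → Measure V) (hprob : ∀ t : ℝ, IsProbabilityMeasure (ν t))
    (hskew : ∀ s t : ℝ, 0 ≤ s → 0 ≤ t → ν (t + s) = ((ν s).map (T t)) ∗ (ν t))
    (νlim : Measure V) [IsProbabilityMeasure νlim]
    (hconv : ∀ f : V → ℝ, Continuous f → (∃ C : ℝ, ∀ x : V, |f x| ≤ C) →
      Tendsto (fun t : ℝ => ∫ v, f v ∂(ν t)) atTop (𝓝 (∫ v, f v ∂νlim))) :
    ∀ t : ℝ, 0 ≤ t → νlim = (νlim.map (T t)) ∗ (ν t) := by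
  intro t ht
  have hνt := hprob t
  have hmeasT : Measurable (T t) := (T t).continuous.measurable
  have hmapprob : IsProbabilityMeasure (νlim.map (T t)) :=
    Measure.isProbabilityMeasure_map hmeasT.aemeasurable
  -- Key: equality of integrals of bounded continuous real functions
  have key : ∀ g : V → ℝ, Continuous g → ∀ C : ℝ, (∀ x, |g x| ≤ C) →
      ∫ v, g v ∂νlim = ∫ v, g v ∂((νlim.map (T t)) ∗ (ν t)) := by
    intro g hg C hC
    set H : V → ℝ := fun x => ∫ y, g (x + y) ∂(ν t) with hHdef
    have hHbound : ∀ x, |H x| ≤ C := by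
      intro x
      rw [← Real.norm_eq_abs]
      calc ‖H x‖ ≤ C * ((ν t) Set.univ).toReal := by
            apply norm_integral_le_of_norm_le_const
            exact Eventually.of_forall fun y => by
              simpa [Real.norm_eq_abs] using hC (x + y)
        _ = C := by simp
    have hHcont : Continuous H := by
      rw [continuous_iff_continuousAt]
      intro x₀
      apply continuousAt_of_dominated (bound := fun _ => C)
      · exact Eventually.of_forall fun x =>
          (hg.comp (continuous_const.add continuous_id)).aestronglyMeasurable
      · exact Eventually.of_forall fun x => Eventually.of_forall fun y => by
          simpa [Real.norm_eq_abs] using hC (x + y)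
      · exact integrable_const C
      · exact Eventually.of_forall fun y =>
          ((hg.comp (continuous_id.add continuous_const)).continuousAt)
    have hF : Continuous fun x => H (T t x) := hHcont.comp (T t).continuous
    -- integral against the convolution
    have conv_int : ∀ μ : Measure V, IsProbabilityMeasure μ →
        ∫ v, g v ∂((μ.map (T t)) ∗ (ν t)) = ∫ x, H (T t x) ∂μ := by
      intro μ hμ
      have hmap : IsProbabilityMeasure (μ.map (T t)) :=
        Measure.isProbabilityMeasure_map hmeasT.aemeasurable
      rw [Measure.conv, integral_map (by fun_prop) hg.aestronglyMeasurable]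
      rw [MeasureTheory.integral_prod]
      · exact integral_map hmeasT.aemeasurable hHcont.aestronglyMeasurable
      · apply Integrable.mono' (integrable_const C)
        · exact (hg.comp continuous_add).aestronglyMeasurable
        · exact Eventually.of_forall fun p => by
            simpa [Real.norm_eq_abs] using hC (p.1 + p.2)
    have limA : Tendsto (fun s : ℝ => ∫ v, g v ∂(ν (t + s))) atTop
        (𝓝 (∫ v, g v ∂νlim)) :=
      (hconv g hg ⟨C, hC⟩).comp (tendsto_atTop_add_const_left atTop t tendsto_id)
    have limB : Tendsto (fun s : ℝ => ∫ v, g v ∂(ν (t + s))) atTop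
        (𝓝 (∫ x, H (T t x) ∂νlim)) := by
      have h0 := hconv (fun x => H (T t x)) hF ⟨C, fun x => hHbound _⟩
      apply h0.congr'
      filter_upwards [eventually_ge_atTop (0 : ℝ)] with s hs
      rw [hskew s t hs ht, conv_int (ν s) (hprob s)]
    rw [tendsto_nhds_unique limA limB, conv_int νlim inferInstance]
  -- conclude equality of measures
  apply ext_of_forall_lintegral_eq_of_IsFiniteMeasure
  intro f
  have hcont : Continuous fun x => (f x : ℝ) := NNReal.continuous_coe.comp f.continuous
  obtain ⟨C, hCd⟩ := f.bounded
  have hfb : ∀ x, |(f x : ℝ)| ≤ (f 0 : ℝ) + C := fun x => by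
    rw [abs_of_nonneg (f x).coe_nonneg]
    have := hCd x 0
    rw [NNReal.dist_eq] at this
    have h2 : (f x : ℝ) - (f 0 : ℝ) ≤ C := (le_abs_self _).trans this
    linarith
  have hRHSprob : IsProbabilityMeasure ((νlim.map (T t)) ∗ (ν t)) := by infer_instance
  have int1 : Integrable (fun x => (f x : ℝ)) νlim := by
    apply Integrable.mono' (integrable_const ((f 0 : ℝ) + C)) hcont.aestronglyMeasurable
    exact Eventually.of_forall fun x => by simpa [Real.norm_eq_abs] using hfb x
  have int2 : Integrable (fun x => (f x : ℝ)) ((νlim.map (T t)) ∗ (ν t)) := by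
    apply Integrable.mono' (integrable_const ((f 0 : ℝ) + C)) hcont.aestronglyMeasurable
    exact Eventually.of_forall fun x => by simpa [Real.norm_eq_abs] using hfb x
  rw [lintegral_coe_eq_integral _ int1, lintegral_coe_eq_integral _ int2,
    key (fun x => (f x : ℝ)) hcont ((f 0 : ℝ) + C) hfb]
end

section
/- Let V be a real separable Hilbert space, (T(t))_{t≥0} a semigroup of bounded linear operators on V (T(0) = Id and T(t+s) = T(t)T(s)) which is stable, i.e. T(t)v → 0 in V as t → ∞ for every v ∈ V, and let (ν_t)_{t≥0} be a skew-convolution semigroup with respect to (T(t))_{t≥0}, i.e. ν_{t+s} = T_tν_s ∗ ν_t for all s,t ≥ 0. Then there exists a stationary measure ν (i.e. a Borel probability measure ν with ν = T_tν ∗ ν_t for all t ≥ 0) if and only if ν_t converges weakly as t → ∞; in this case the weak limit of (ν_t)_{t≥0} equals the stationary measure ν. -/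
open MeasureTheory Filter Topology
open scoped MeasureTheory NNReal

/-!
If `ν = T_t ν ∗ ν_t` for all `t`, then for a bounded `K`-Lipschitz function `g` with oscillation
at most `C` the integrals of `g` against `ν` and `ν_t` differ by at most
`∫ min (K ‖T_t x‖) C dν(x)`, which tends to `0` by stability and dominated convergence; bounded
Lipschitz functions suffice to test weak convergence. Conversely, `ρ ↦ T_t ρ ∗ ν_t` is weakly
continuous and maps `ν_s` to `ν_{t+s}`, so a weak limit of `ν_s` is one of its fixed points.
Uniqueness of weak limits identifies the limit with any stationary measure.
-/

namespace MeasureTheory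

namespace ProbabilityMeasure

theorem tendsto_iff_forall_continuous_bounded_integral_tendsto {Ω ι : Type*} [MeasurableSpace Ω]
    [TopologicalSpace Ω] [OpensMeasurableSpace Ω] {l : Filter ι} {μs : ι → ProbabilityMeasure Ω}
    {μ : ProbabilityMeasure Ω} :
    Tendsto μs l (𝓝 μ) ↔ ∀ f : Ω → ℝ, Continuous f → (∃ C : ℝ, ∀ x, |f x| ≤ C) →
      Tendsto (fun i ↦ ∫ x, f x ∂(μs i : Measure Ω)) l (𝓝 (∫ x, f x ∂(μ : Measure Ω))) := by
  rw [tendsto_iff_forall_integral_tendsto]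
  refine ⟨fun h f hf ⟨C, hC⟩ ↦ ?_, fun h f ↦ h f f.continuous ⟨‖f‖, fun x ↦ ?_⟩⟩
  · exact h (.ofNormedAddCommGroup f hf C (by simpa only [Real.norm_eq_abs] using hC))
  · simpa only [Real.norm_eq_abs] using f.norm_coe_le_norm x

section Conv

variable {M : Type*} [AddMonoid M] [TopologicalSpace M] [ContinuousAdd M]
  [SecondCountableTopology M] [MeasurableSpace M] [BorelSpace M]

noncomputable def conv (μ ν : ProbabilityMeasure M) : ProbabilityMeasure M :=
  ⟨(μ : Measure M) ∗ ν, inferInstance⟩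

@[simp] lemma toMeasure_conv (μ ν : ProbabilityMeasure M) :
    (μ.conv ν : Measure M) = (μ : Measure M) ∗ ν := rfl

theorem continuous_conv [TopologicalSpace.PseudoMetrizableSpace M] :
    Continuous fun p : ProbabilityMeasure M × ProbabilityMeasure M ↦ p.1.conv p.2 :=
  (continuous_map continuous_add).comp continuous_prod

theorem toMeasure_eq_map_conv_of_tendsto [TopologicalSpace.PseudoMetrizableSpace M]
    {T : ℝ → M → M} (hT : ∀ t, Continuous (T t)) {νs : ℝ → ProbabilityMeasure M}
    (hskew : ∀ s t : ℝ, 0 ≤ s → 0 ≤ t →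
      (νs (t + s) : Measure M) = (νs s : Measure M).map (T t) ∗ νs t)
    {μ : ProbabilityMeasure M} (hμ : Tendsto νs atTop (𝓝 μ)) {t : ℝ} (ht : 0 ≤ t) :
    (μ : Measure M) = (μ : Measure M).map (T t) ∗ νs t := by
  let Φ (ρ : ProbabilityMeasure M) : ProbabilityMeasure M :=
    (ρ.map (hT t).measurable.aemeasurable).conv (νs t)
  have hΦ : Continuous Φ := continuous_conv.comp ((continuous_map (hT t)).prodMk continuous_const)
  have hshift : Tendsto (fun s ↦ νs (t + s)) atTop (𝓝 μ) :=
    hμ.comp (tendsto_atTop_add_const_left atTop t tendsto_id)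
  have hstep : (fun s ↦ νs (t + s)) =ᶠ[atTop] fun s ↦ Φ (νs s) := by
    filter_upwards [eventually_ge_atTop 0] with s hs
    exact Subtype.ext (hskew s t hs ht)
  have hfix : μ = Φ μ := tendsto_nhds_unique (hshift.congr' hstep) ((hΦ.tendsto μ).comp hμ)
  simpa [Φ] using congrArg toMeasure hfix

end Conv

end ProbabilityMeasure

theorem tendsto_integral_map_of_tendsto {Ω X ι : Type*} [MeasurableSpace Ω] [TopologicalSpace X]
    [MeasurableSpace X] [OpensMeasurableSpace X] {l : Filter ι} [l.IsCountablyGenerated]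
    (μ : Measure Ω) [IsProbabilityMeasure μ] {L : ι → Ω → X} (hL : ∀ i, Measurable (L i))
    {a : X} (hLa : ∀ x, Tendsto (fun i ↦ L i x) l (𝓝 a)) {f : X → ℝ} (hf : Continuous f)
    {C : ℝ} (hC : ∀ x, |f x| ≤ C) :
    Tendsto (fun i ↦ ∫ x, f x ∂(μ.map (L i))) l (𝓝 (f a)) := by
  refine (tendsto_congr fun i ↦ integral_map (hL i).aemeasurable hf.aestronglyMeasurable).2 ?_
  have := tendsto_integral_filter_of_dominated_convergence (μ := μ) (fun _ ↦ C)
    (.of_forall fun i ↦ (hf.measurable.comp (hL i)).aestronglyMeasurable)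
    (.of_forall fun i ↦ .of_forall fun x ↦ hC (L i x)) (integrable_const C)
    (.of_forall fun x ↦ (hf.tendsto a).comp (hLa x))
  simpa using this

section Normed

variable {E : Type*} [NormedAddCommGroup E] [SecondCountableTopology E] [MeasurableSpace E]
  [BorelSpace E]

theorem abs_integral_conv_sub_integral_le (ρ κ : Measure E) [IsProbabilityMeasure ρ]
    [IsProbabilityMeasure κ] {g : E → ℝ} {K : ℝ≥0} (hg : LipschitzWith K g) {C : ℝ}
    (hC : ∀ x y, dist (g x) (g y) ≤ C) :
    |∫ x, g x ∂(ρ ∗ κ) - ∫ y, g y ∂κ| ≤ ∫ x, min (K * ‖x‖) C ∂ρ := by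
  have hC0 : 0 ≤ C := by simpa using hC 0 0
  have hint {f : E × E → E} (hf : Continuous f) : Integrable (fun z ↦ g (f z)) (ρ.prod κ) :=
    .of_bound (hg.continuous.comp hf).aestronglyMeasurable (‖g 0‖ + C) (.of_forall fun z ↦
      (norm_le_norm_add_norm_sub' _ (g 0)).trans (by grw [← dist_eq_norm, hC]))
  have hdiff (x y : E) : |g (x + y) - g y| ≤ min (K * ‖x‖) C := by
    rw [← Real.dist_eq]
    refine le_min ?_ (hC _ _)
    simpa [dist_eq_norm] using hg.dist_le_mul (x + y) y
  have hbound : Integrable (fun z : E × E ↦ min (K * ‖z.1‖) C) (ρ.prod κ) :=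
    .of_bound (by fun_prop) C (.of_forall fun z ↦ by
      rw [Real.norm_of_nonneg (by positivity)]
      exact min_le_right _ _)
  calc |∫ x, g x ∂(ρ ∗ κ) - ∫ y, g y ∂κ|
      = |∫ z, (g (z.1 + z.2) - g z.2) ∂(ρ.prod κ)| := by
        rw [integral_sub (hint (by fun_prop)) (hint continuous_snd), integral_fun_snd,
          Measure.conv, integral_map (by fun_prop) hg.continuous.aestronglyMeasurable]
        simp
    _ ≤ ∫ z, |g (z.1 + z.2) - g z.2| ∂(ρ.prod κ) := abs_integral_le_integral_abs
    _ ≤ ∫ z, min (K * ‖z.1‖) C ∂(ρ.prod κ) :=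
        integral_mono (hint (by fun_prop) |>.sub (hint continuous_snd)).abs hbound
          fun z ↦ hdiff z.1 z.2
    _ = ∫ x, min (K * ‖x‖) C ∂ρ := by
        rw [integral_fun_fst (fun x ↦ min (K * ‖x‖) C)]
        simp

theorem ProbabilityMeasure.tendsto_of_eq_map_conv {ι : Type*} {l : Filter ι}
    [l.IsCountablyGenerated] {L : ι → E → E} (hL : ∀ i, Measurable (L i))
    (hL0 : ∀ x, Tendsto (fun i ↦ L i x) l (𝓝 0)) {νs : ι → ProbabilityMeasure E}
    {μ : ProbabilityMeasure E}
    (h : ∀ᶠ i in l, (μ : Measure E) = (μ : Measure E).map (L i) ∗ νs i) :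
    Tendsto νs l (𝓝 μ) := by
  rw [tendsto_iff_forall_lipschitz_integral_tendsto]
  rintro g ⟨C, hC⟩ ⟨K, hg⟩
  have hC0 : 0 ≤ C := by simpa using hC 0 0
  have hbound : Tendsto (fun i ↦ ∫ x, min (K * ‖x‖) C ∂((μ : Measure E).map (L i))) l (𝓝 0) := by
    simpa [hC0] using tendsto_integral_map_of_tendsto μ hL hL0 (by fun_prop : Continuous
      fun x : E ↦ min (K * ‖x‖) C) (C := C) fun x ↦ by
        rw [abs_of_nonneg (by positivity)]; exact min_le_right _ _
  rw [tendsto_iff_norm_sub_tendsto_zero]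
  refine squeeze_zero' (.of_forall fun _ ↦ norm_nonneg _) ?_ hbound
  filter_upwards [h] with i hi
  have := Measure.isProbabilityMeasure_map (μ := (μ : Measure E)) (hL i).aemeasurable
  rw [Real.norm_eq_abs, abs_sub_comm, congrArg (fun m ↦ ∫ x, g x ∂m) hi]
  exact abs_integral_conv_sub_integral_le _ _ hg hC

end Normed

end MeasureTheory

theorem stmt6_general
    {V : Type*}
    [NormedAddCommGroup V] [InnerProductSpace ℝ V] [SecondCountableTopology V]
    [MeasurableSpace V] [BorelSpace V]
    (T : ℝ → V →L[ℝ] V)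
    (hstable : ∀ v : V, Tendsto (fun t : ℝ => T t v) atTop (𝓝 0))
    (ν : ℝ → Measure V) (hprob : ∀ t : ℝ, IsProbabilityMeasure (ν t))
    (hskew : ∀ s t : ℝ, 0 ≤ s → 0 ≤ t → ν (t + s) = ((ν s).map (T t)) ∗ (ν t)) :
    ((∃ ν0 : Measure V, IsProbabilityMeasure ν0 ∧
        ∀ t : ℝ, 0 ≤ t → ν0 = (ν0.map (T t)) ∗ (ν t))
      ↔ (∃ νlim : Measure V, IsProbabilityMeasure νlim ∧
          ∀ f : V → ℝ, Continuous f → (∃ C : ℝ, ∀ x : V, |f x| ≤ C) →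
            Tendsto (fun t : ℝ => ∫ v, f v ∂(ν t)) atTop (𝓝 (∫ v, f v ∂νlim))))
    ∧ (∀ ν0 νlim : Measure V, IsProbabilityMeasure ν0 → IsProbabilityMeasure νlim →
        (∀ t : ℝ, 0 ≤ t → ν0 = (ν0.map (T t)) ∗ (ν t)) →
        (∀ f : V → ℝ, Continuous f → (∃ C : ℝ, ∀ x : V, |f x| ≤ C) →
          Tendsto (fun t : ℝ => ∫ v, f v ∂(ν t)) atTop (𝓝 (∫ v, f v ∂νlim))) →
        νlim = ν0) := by
  let P (t : ℝ) : ProbabilityMeasure V := ⟨ν t, hprob t⟩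
  have weak_iff (μ : Measure V) (hμ : IsProbabilityMeasure μ) :
      (∀ f : V → ℝ, Continuous f → (∃ C : ℝ, ∀ x : V, |f x| ≤ C) →
        Tendsto (fun t : ℝ => ∫ v, f v ∂(ν t)) atTop (𝓝 (∫ v, f v ∂μ))) ↔
      Tendsto P atTop (𝓝 (⟨μ, hμ⟩ : ProbabilityMeasure V)) :=
    (ProbabilityMeasure.tendsto_iff_forall_continuous_bounded_integral_tendsto
      (μs := P) (μ := ⟨μ, hμ⟩)).symm
  have of_stationary (μ : Measure V) (hμ : IsProbabilityMeasure μ)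
      (hstat : ∀ t : ℝ, 0 ≤ t → μ = (μ.map (T t)) ∗ (ν t)) :
      Tendsto P atTop (𝓝 (⟨μ, hμ⟩ : ProbabilityMeasure V)) :=
    ProbabilityMeasure.tendsto_of_eq_map_conv (fun t ↦ (T t).measurable) hstable
      ((eventually_ge_atTop 0).mono hstat)
  refine ⟨⟨fun ⟨μ, hμ, hstat⟩ ↦ ⟨μ, hμ, (weak_iff μ hμ).2 (of_stationary μ hμ hstat)⟩,
    fun ⟨μ, hμ, hlim⟩ ↦ ⟨μ, hμ, fun t ht ↦ ?_⟩⟩,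
    fun μ₀ μ hμ₀ hμ hstat hlim ↦ congrArg ProbabilityMeasure.toMeasure <|
      tendsto_nhds_unique ((weak_iff μ hμ).1 hlim) (of_stationary μ₀ hμ₀ hstat)⟩
  exact ProbabilityMeasure.toMeasure_eq_map_conv_of_tendsto (νs := P) (fun t ↦ (T t).continuous)
    hskew ((weak_iff μ hμ).1 hlim) ht

/-- For a stable semigroup `(T(t))` and a skew-convolution semigroup `(ν_t)`, a stationary
measure exists if and only if `ν_t` converges weakly as `t → ∞`; in this case the weak limit
equals the stationary measure. -/
theorem stmt6
    {V : Type*}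
    [NormedAddCommGroup V] [InnerProductSpace ℝ V] [CompleteSpace V] [SecondCountableTopology V]
    [MeasurableSpace V] [BorelSpace V]
    (T : ℝ → V →L[ℝ] V)
    (hT0 : T 0 = ContinuousLinearMap.id ℝ V)
    (hTadd : ∀ s t : ℝ, 0 ≤ s → 0 ≤ t → T (s + t) = (T s).comp (T t))
    (hstable : ∀ v : V, Tendsto (fun t : ℝ => T t v) atTop (𝓝 0))
    (ν : ℝ → Measure V) (hprob : ∀ t : ℝ, IsProbabilityMeasure (ν t))
    (hskew : ∀ s t : ℝ, 0 ≤ s → 0 ≤ t → ν (t + s) = ((ν s).map (T t)) ∗ (ν t)) :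
    ((∃ ν0 : Measure V, IsProbabilityMeasure ν0 ∧
        ∀ t : ℝ, 0 ≤ t → ν0 = (ν0.map (T t)) ∗ (ν t))
      ↔ (∃ νlim : Measure V, IsProbabilityMeasure νlim ∧
          ∀ f : V → ℝ, Continuous f → (∃ C : ℝ, ∀ x : V, |f x| ≤ C) →
            Tendsto (fun t : ℝ => ∫ v, f v ∂(ν t)) atTop (𝓝 (∫ v, f v ∂νlim))))
    ∧ (∀ ν0 νlim : Measure V, IsProbabilityMeasure ν0 → IsProbabilityMeasure νlim →
        (∀ t : ℝ, 0 ≤ t → ν0 = (ν0.map (T t)) ∗ (ν t)) →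
        (∀ f : V → ℝ, Continuous f → (∃ C : ℝ, ∀ x : V, |f x| ≤ C) →
          Tendsto (fun t : ℝ => ∫ v, f v ∂(ν t)) atTop (𝓝 (∫ v, f v ∂νlim))) →
        νlim = ν0) :=
  stmt6_general T hstable ν hprob hskew
end

section
/- Let V be a real separable Hilbert space and (T(t))_{t≥0} a family of bounded linear operators on V with T(t)v → 0 in V as t → ∞ for every v ∈ V. If β is a Borel probability measure on V satisfying β = β ∘ T(t)⁻¹ for all t ≥ 0, then β is the Dirac measure at 0. -/
open MeasureTheory Filter Topology
open scoped ENNReal NNReal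

/-- If `T(t)v → 0` as `t → ∞` for every `v` and a Borel probability measure `β` satisfies
`β = β ∘ T(t)⁻¹` for all `t ≥ 0`, then `β` is the Dirac measure at `0`. -/
theorem stmt7
    {V : Type*}
    [NormedAddCommGroup V] [InnerProductSpace ℝ V] [CompleteSpace V] [SecondCountableTopology V]
    [MeasurableSpace V] [BorelSpace V]
    (T : ℝ → V →L[ℝ] V)
    (hstable : ∀ v : V, Tendsto (fun t : ℝ => T t v) atTop (𝓝 0))
    (β : Measure V) [IsProbabilityMeasure β]
    (hinv : ∀ t : ℝ, 0 ≤ t → β = β.map (T t)) :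
    β = Measure.dirac (0 : V) := by
  apply ext_of_forall_lintegral_eq_of_IsFiniteMeasure
  intro f
  rw [lintegral_dirac]
  -- For each n : ℕ, ∫⁻ f dβ = ∫⁻ f (T n v) dβ
  have key : ∀ n : ℕ, ∫⁻ x, (f x : ℝ≥0∞) ∂β = ∫⁻ x, (f (T n x) : ℝ≥0∞) ∂β := by
    intro n
    conv_lhs => rw [hinv n (Nat.cast_nonneg n)]
    rw [lintegral_map (by fun_prop) (T n).continuous.measurable]
  -- DCT: ∫⁻ f (T n v) dβ → ∫⁻ f 0 dβ = f 0
  have hDCT : Tendsto (fun n : ℕ => ∫⁻ x, (f (T n x) : ℝ≥0∞) ∂β) atTop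
      (𝓝 (∫⁻ _x, (f 0 : ℝ≥0∞) ∂β)) := by
    apply tendsto_lintegral_of_dominated_convergence (fun _ => (nndist 0 f : ℝ≥0∞))
    · intro n; fun_prop
    · intro n
      filter_upwards with x
      exact_mod_cast f.apply_le_nndist_zero (T n x)
    · simp [lintegral_const, edist_ne_top (0 : BoundedContinuousFunction V ℝ≥0) f]
    · filter_upwards with x
      have : Tendsto (fun n : ℕ => T n x) atTop (𝓝 0) :=
        (hstable x).comp tendsto_natCast_atTop_atTop
      exact (ENNReal.continuous_coe.tendsto _).comp ((f.continuous.tendsto 0).comp this)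
  have hconst : Tendsto (fun _n : ℕ => ∫⁻ x, (f x : ℝ≥0∞) ∂β) atTop
      (𝓝 (∫⁻ _x, (f 0 : ℝ≥0∞) ∂β)) :=
    hDCT.congr (fun n => (key n).symm)
  have := tendsto_nhds_unique (tendsto_const_nhds (x := ∫⁻ x, (f x : ℝ≥0∞) ∂β)
      (f := atTop (α := ℕ))) hconst
  rw [this, lintegral_const, measure_univ, mul_one]
end

section
/- Let V be a real separable Hilbert space, (T(t))_{t≥0} a semigroup of bounded linear operators on V (T(0) = Id and T(t+s) = T(t)T(s)) which is stable, i.e. T(t)v → 0 in V as t → ∞ for every v ∈ V, and let (ν_t)_{t≥0} be a skew-convolution semigroup with respect to (T(t))_{t≥0}, i.e. ν_{t+s} = T_tν_s ∗ ν_t for all s,t ≥ 0. If λ and ν are Borel probability measures on V that are both stationary, i.e. λ = T_tλ ∗ ν_t and ν = T_tν ∗ ν_t for all t ≥ 0, then λ = ν. -/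
/-!
Stationarity gives `∫ f dρ - ∫ f dν_t = ∫∫ (f (T_t x + y) - f y) dν_t(y) dρ(x)`.
For a bounded Lipschitz `f` the integrand is at most `min C (K ‖T_t x‖)`, which tends to `0`
by stability and dominated convergence. Hence `ν_t` converges weakly to every stationary probability measure, and
weak limits are unique.
-/

open MeasureTheory Filter Topology
open scoped MeasureTheory NNReal

section

variable {E : Type*} [NormedAddCommGroup E] [MeasurableSpace E] [OpensMeasurableSpace E]

lemma tendsto_integral_min_mul_norm_map {ι : Type*} {l : Filter ι} [l.IsCountablyGenerated]
    (ρ : Measure E) [IsFiniteMeasure ρ] {T : ι → E → E} (hTm : ∀ t, Measurable (T t))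
    (hT : ∀ x, Tendsto (fun t => T t x) l (𝓝 0)) {C : ℝ} (hC : 0 ≤ C) (K : ℝ≥0) :
    Tendsto (fun t => ∫ x, min C (K * ‖x‖) ∂(ρ.map (T t))) l (𝓝 0) := by
  have hcont : Continuous fun x : E => min C (K * ‖x‖) := by fun_prop
  simp_rw [integral_map (hTm _).aemeasurable hcont.aestronglyMeasurable]
  have hlim : ∀ x, Tendsto (fun t => min C (K * ‖T t x‖)) l (𝓝 0) := fun x => by
    simpa [min_eq_right hC] using
      (tendsto_const_nhds (x := C)).min (((hT x).norm).const_mul (K : ℝ))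
  simpa using tendsto_integral_filter_of_dominated_convergence (fun _ => C)
    (Eventually.of_forall fun t => (hcont.measurable.comp (hTm t)).aestronglyMeasurable)
    (Eventually.of_forall fun t => ae_of_all _ fun x => by
      rw [Function.comp_apply, Real.norm_eq_abs, abs_of_nonneg (le_min hC (by positivity))]
      exact min_le_left _ _)
    (integrable_const C) (ae_of_all _ hlim)

lemma abs_integral_conv_sub_integral_le [MeasurableAdd₂ E] (ρ ν : Measure E)
    [IsProbabilityMeasure ρ] [IsProbabilityMeasure ν] {f : E → ℝ} {C : ℝ} {K : ℝ≥0}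
    (hbdd : ∀ x y, dist (f x) (f y) ≤ C) (hf : LipschitzWith K f) :
    |∫ x, f x ∂(ρ ∗ ν) - ∫ x, f x ∂ν| ≤ ∫ x, min C (K * ‖x‖) ∂ρ := by
  have hC : 0 ≤ C := dist_nonneg.trans (hbdd 0 0)
  let g : BoundedContinuousFunction E ℝ := ⟨⟨f, hf.continuous⟩, ⟨C, hbdd⟩⟩
  have hconv : ∫ x, f x ∂(ρ ∗ ν) = ∫ p, f (p.1 + p.2) ∂(ρ.prod ν) :=
    integral_map measurable_add.aemeasurable hf.continuous.aestronglyMeasurable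
  have hsnd : ∫ x, f x ∂ν = ∫ p, f p.2 ∂(ρ.prod ν) := by simp [integral_fun_snd]
  have hfst : ∫ x, min C (K * ‖x‖) ∂ρ = ∫ p, min C (K * ‖p.1‖) ∂(ρ.prod ν) := by
    simp [integral_fun_fst (μ := ρ) (ν := ν) fun x => min C (K * ‖x‖)]
  have hshift : ∀ a y, |f (a + y) - f y| ≤ min C (K * ‖a‖) := fun a y => by
    rw [← Real.dist_eq]
    refine le_min (hbdd _ _) ?_
    simpa [dist_eq_norm] using hf.dist_le_mul (a + y) y
  have hadd_int : Integrable (fun p : E × E => f (p.1 + p.2)) (ρ.prod ν) :=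
    (g.integrable _).comp_measurable measurable_add
  have hsnd_int : Integrable (fun p : E × E => f p.2) (ρ.prod ν) :=
    (g.integrable _).comp_measurable measurable_snd
  have hbound_int : Integrable (fun p : E × E => min C (K * ‖p.1‖)) (ρ.prod ν) :=
    (integrable_const C).mono'
      ((by fun_prop : Continuous fun x : E => min C (K * ‖x‖)).measurable.comp
        measurable_fst).aestronglyMeasurable (ae_of_all _ fun p => by
      rw [Real.norm_eq_abs, abs_of_nonneg (le_min hC (by positivity))]
      exact min_le_left _ _)
  rw [hconv, hsnd, hfst, ← integral_sub hadd_int hsnd_int]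
  exact abs_integral_le_integral_abs.trans
    (integral_mono (hadd_int.sub hsnd_int).abs hbound_int fun p => hshift p.1 p.2)

lemma tendsto_of_eventually_eq_map_conv [MeasurableAdd₂ E] {ι : Type*} {l : Filter ι}
    [l.IsCountablyGenerated] {T : ι → E → E} (hTm : ∀ t, Measurable (T t))
    (hT : ∀ x, Tendsto (fun t => T t x) l (𝓝 0)) (ν : ι → ProbabilityMeasure E)
    (ρ : ProbabilityMeasure E)
    (hρ : ∀ᶠ t in l, (ρ : Measure E) = (ρ : Measure E).map (T t) ∗ ν t) :
    Tendsto ν l (𝓝 ρ) := by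
  rw [tendsto_iff_forall_lipschitz_integral_tendsto]
  rintro f ⟨C, hbdd⟩ ⟨K, hf⟩
  have hC : 0 ≤ C := dist_nonneg.trans (hbdd 0 0)
  refine tendsto_iff_dist_tendsto_zero.2 <|
    squeeze_zero' (Eventually.of_forall fun _ => dist_nonneg) ?_
      (tendsto_integral_min_mul_norm_map ρ hTm hT hC K)
  filter_upwards [hρ] with t ht
  have : IsProbabilityMeasure ((ρ : Measure E).map (T t)) :=
    Measure.isProbabilityMeasure_map (hTm t).aemeasurable
  have key := abs_integral_conv_sub_integral_le ((ρ : Measure E).map (T t)) (ν t) hbdd hf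
  rwa [← ht, abs_sub_comm, ← Real.dist_eq] at key

end

theorem stmt8_general
    {V : Type*}
    [NormedAddCommGroup V] [InnerProductSpace ℝ V] [SecondCountableTopology V]
    [MeasurableSpace V] [BorelSpace V]
    (T : ℝ → V →L[ℝ] V)
    (hstable : ∀ v : V, Tendsto (fun t : ℝ => T t v) atTop (𝓝 0))
    (ν : ℝ → Measure V) (hprob : ∀ t : ℝ, IsProbabilityMeasure (ν t))
    (lam μ : Measure V) [IsProbabilityMeasure lam] [IsProbabilityMeasure μ]
    (hlam : ∀ t : ℝ, 0 ≤ t → lam = (lam.map (T t)) ∗ (ν t))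
    (hμ : ∀ t : ℝ, 0 ≤ t → μ = (μ.map (T t)) ∗ (ν t)) :
    lam = μ := by
  let νP : ℝ → ProbabilityMeasure V := fun t => ⟨ν t, hprob t⟩
  have hTm : ∀ t, Measurable (T t) := fun t => (T t).continuous.measurable
  have hlim_lam : Tendsto νP atTop (𝓝 (⟨lam, ‹_›⟩ : ProbabilityMeasure V)) :=
    tendsto_of_eventually_eq_map_conv hTm hstable νP _ ((eventually_ge_atTop 0).mono hlam)
  have hlim_μ : Tendsto νP atTop (𝓝 (⟨μ, ‹_›⟩ : ProbabilityMeasure V)) :=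
    tendsto_of_eventually_eq_map_conv hTm hstable νP _ ((eventually_ge_atTop 0).mono hμ)
  exact congrArg ProbabilityMeasure.toMeasure (tendsto_nhds_unique hlim_lam hlim_μ)

/-- For a stable semigroup `(T(t))` and a skew-convolution semigroup `(ν_t)`, stationary
measures are unique. -/
theorem stmt8
    {V : Type*}
    [NormedAddCommGroup V] [InnerProductSpace ℝ V] [CompleteSpace V] [SecondCountableTopology V]
    [MeasurableSpace V] [BorelSpace V]
    (T : ℝ → V →L[ℝ] V)
    (hT0 : T 0 = ContinuousLinearMap.id ℝ V)
    (hTadd : ∀ s t : ℝ, 0 ≤ s → 0 ≤ t → T (s + t) = (T s).comp (T t))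
    (hstable : ∀ v : V, Tendsto (fun t : ℝ => T t v) atTop (𝓝 0))
    (ν : ℝ → Measure V) (hprob : ∀ t : ℝ, IsProbabilityMeasure (ν t))
    (hskew : ∀ s t : ℝ, 0 ≤ s → 0 ≤ t → ν (t + s) = ((ν s).map (T t)) ∗ (ν t))
    (lam μ : Measure V) [IsProbabilityMeasure lam] [IsProbabilityMeasure μ]
    (hlam : ∀ t : ℝ, 0 ≤ t → lam = (lam.map (T t)) ∗ (ν t))
    (hμ : ∀ t : ℝ, 0 ≤ t → μ = (μ.map (T t)) ∗ (ν t)) :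
    lam = μ :=
  stmt8_general T hstable ν hprob lam μ hlam hμ
end

section
/- Let α ∈ (0,2) and let (λ_k)_{k≥1} be a nondecreasing sequence of strictly positive real numbers with ∑_{k=1}^∞ 1/λ_k < ∞. Then ∫₀^∞ ( ∑_{k=1}^∞ e^{−2λ_k s} )^{α/2} ds ≤ ( (2−α)/(α λ_1) )^{(2−α)/2} ( ∑_{k=1}^∞ 1/λ_k )^{α/2}; in particular this integral is finite. -/
open MeasureTheory Filter Topology
open scoped ENNReal

/-!
Factor `e^{-2λ_k s} = e^{-(2λ_k - λ_1) s} e^{-λ_1 s}` and apply Hölder's inequality with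
exponents `2/α` and `2/(2-α)`. The first factor contributes
`(∫₀^∞ ∑_k e^{-(2λ_k - λ_1) s} ds)^{α/2} = (∑_k 1/(2λ_k - λ_1))^{α/2} ≤ (∑_k 1/λ_k)^{α/2}`,
since `2λ_k - λ_1 ≥ λ_k` by monotonicity; the second is the integral of a single exponential,
`(∫₀^∞ e^{-λ_1 α s/(2-α)} ds)^{(2-α)/2} = ((2-α)/(αλ_1))^{(2-α)/2}`.
-/

/-- Hölder's inequality with the exponents `1 / θ` and `1 / (1 - θ)`. -/
theorem ENNReal.lintegral_mul_rpow_le {X : Type*} [MeasurableSpace X] {μ : Measure X}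
    {θ : ℝ} (hθ0 : 0 < θ) (hθ1 : θ < 1) {f g : X → ℝ≥0∞}
    (hf : AEMeasurable f μ) (hg : AEMeasurable g μ) :
    ∫⁻ x, (f x * g x) ^ θ ∂μ
      ≤ (∫⁻ x, f x ∂μ) ^ θ * (∫⁻ x, g x ^ (θ / (1 - θ)) ∂μ) ^ (1 - θ) := by
  have holder := ENNReal.lintegral_mul_le_Lp_mul_Lq μ
    (Real.HolderConjugate.inv_one_sub_inv hθ0 hθ1) (hf.pow_const θ) (hg.pow_const θ)
  simp only [Pi.mul_apply, ← ENNReal.rpow_mul, one_div, inv_inv, mul_inv_cancel₀ hθ0.ne',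
    ENNReal.rpow_one, ← div_eq_mul_inv] at holder
  simpa only [ENNReal.mul_rpow_of_nonneg _ _ hθ0.le] using holder

theorem lintegral_Ioi_ofReal_exp_neg_mul {c : ℝ} (hc : 0 < c) :
    ∫⁻ x in Set.Ioi (0 : ℝ), ENNReal.ofReal (Real.exp (-(c * x))) = ENNReal.ofReal (1 / c) := by
  have hint : IntegrableOn (fun x => Real.exp (-(c * x))) (Set.Ioi 0) := by
    simpa only [neg_mul] using integrableOn_exp_mul_Ioi (neg_neg_of_pos hc) 0
  rw [← ofReal_integral_eq_lintegral_ofReal hint (ae_of_all _ fun x => (Real.exp_pos _).le)]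
  simp only [← neg_mul]
  rw [integral_exp_mul_Ioi (neg_neg_of_pos hc), mul_zero, Real.exp_zero]
  congr 1
  field_simp

theorem lintegral_Ioi_ofReal_exp_neg_mul_rpow {c r : ℝ} (hc : 0 < c) (hr : 0 < r) :
    ∫⁻ x in Set.Ioi (0 : ℝ), ENNReal.ofReal (Real.exp (-(c * x))) ^ r
      = ENNReal.ofReal (1 / (c * r)) := by
  have hpow : ∀ x, ENNReal.ofReal (Real.exp (-(c * x))) ^ r
      = ENNReal.ofReal (Real.exp (-(c * r * x))) := fun x => by
    rw [ENNReal.ofReal_rpow_of_pos (Real.exp_pos _), ← Real.exp_mul]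
    ring_nf
  simp_rw [hpow]
  exact lintegral_Ioi_ofReal_exp_neg_mul (mul_pos hc hr)

theorem summable_exp_neg_mul_of_summable_one_div {lam : ℕ → ℝ} (hpos : ∀ k, 0 < lam k)
    (hsum : Summable fun k => 1 / lam k) {s : ℝ} (hs : 0 < s) :
    Summable fun k => Real.exp (-(lam k * s)) := by
  refine (hsum.mul_left (1 / s)).of_nonneg_of_le (fun k => (Real.exp_pos _).le) fun k => ?_
  have hx : 0 < lam k * s := mul_pos (hpos k) hs
  calc Real.exp (-(lam k * s)) ≤ 1 / (lam k * s) := by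
        rw [Real.exp_neg, one_div]
        exact inv_anti₀ hx (by linarith [Real.add_one_le_exp (lam k * s)])
    _ = 1 / s * (1 / lam k) := by field_simp

theorem ofReal_tsum_exp_neg_eq_mul {lam : ℕ → ℝ} {s : ℝ}
    (hsum : Summable fun k => Real.exp (-(2 * lam k * s))) (c : ℝ) :
    ENNReal.ofReal (∑' k, Real.exp (-(2 * lam k * s)))
      = (∑' k, ENNReal.ofReal (Real.exp (-((2 * lam k - c) * s))))
          * ENNReal.ofReal (Real.exp (-(c * s))) := by
  rw [ENNReal.ofReal_tsum_of_nonneg (fun k => (Real.exp_pos _).le) hsum,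
    ← ENNReal.tsum_mul_right]
  refine tsum_congr fun k => ?_
  rw [← ENNReal.ofReal_mul (Real.exp_pos _).le, ← Real.exp_add]
  ring_nf

theorem lintegral_Ioi_tsum_exp_neg_le {lam : ℕ → ℝ} {c : ℝ} (hpos : ∀ k, 0 < lam k)
    (hc : ∀ k, c ≤ lam k) :
    ∫⁻ s in Set.Ioi (0 : ℝ), ∑' k, ENNReal.ofReal (Real.exp (-((2 * lam k - c) * s)))
      ≤ ∑' k, ENNReal.ofReal (1 / lam k) := by
  rw [lintegral_tsum fun k => by fun_prop]
  refine ENNReal.tsum_le_tsum fun k => ?_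
  have hk : lam k ≤ 2 * lam k - c := by linarith [hc k]
  rw [lintegral_Ioi_ofReal_exp_neg_mul ((hpos k).trans_le hk)]
  exact ENNReal.ofReal_le_ofReal (one_div_le_one_div_of_le (hpos k) hk)

theorem lintegral_Ioi_tsum_exp_neg_rpow_le {lam : ℕ → ℝ} (hsum : Summable fun k => 1 / lam k)
    {c θ : ℝ} (hc0 : 0 < c) (hc : ∀ k, c ≤ lam k) (hθ0 : 0 < θ) (hθ1 : θ < 1) :
    ∫⁻ s in Set.Ioi (0 : ℝ), ENNReal.ofReal ((∑' k, Real.exp (-(2 * lam k * s))) ^ θ)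
      ≤ ENNReal.ofReal (∑' k, 1 / lam k) ^ θ * ENNReal.ofReal ((1 - θ) / (θ * c)) ^ (1 - θ) := by
  have hpos : ∀ k, 0 < lam k := fun k => hc0.trans_le (hc k)
  calc _ = ∫⁻ s in Set.Ioi (0 : ℝ),
          ((∑' k, ENNReal.ofReal (Real.exp (-((2 * lam k - c) * s))))
            * ENNReal.ofReal (Real.exp (-(c * s)))) ^ θ := by
        refine setLIntegral_congr_fun measurableSet_Ioi fun s hs => ?_
        have hsum' := summable_exp_neg_mul_of_summable_one_div hpos hsum (mul_pos two_pos hs)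
        rw [← ofReal_tsum_exp_neg_eq_mul (hsum'.congr fun k => by ring_nf),
          ENNReal.ofReal_rpow_of_nonneg (tsum_nonneg fun k => (Real.exp_pos _).le) hθ0.le]
    _ ≤ (∫⁻ s in Set.Ioi (0 : ℝ),
            ∑' k, ENNReal.ofReal (Real.exp (-((2 * lam k - c) * s)))) ^ θ
          * (∫⁻ s in Set.Ioi (0 : ℝ),
            ENNReal.ofReal (Real.exp (-(c * s))) ^ (θ / (1 - θ))) ^ (1 - θ) :=
      ENNReal.lintegral_mul_rpow_le hθ0 hθ1 (by fun_prop) (by fun_prop)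
    _ ≤ _ := by
      have hconst : 1 / (c * (θ / (1 - θ))) = (1 - θ) / (θ * c) := by
        field_simp [(sub_pos.mpr hθ1).ne']
      rw [lintegral_Ioi_ofReal_exp_neg_mul_rpow hc0 (div_pos hθ0 (sub_pos.mpr hθ1)), hconst,
        ENNReal.ofReal_tsum_of_nonneg (fun k => (one_div_pos.mpr (hpos k)).le) hsum]
      gcongr
      exact lintegral_Ioi_tsum_exp_neg_le hpos hc

/-- For `α ∈ (0,2)` and a nondecreasing sequence `(λ_k)` of strictly positive numbers with
`∑ 1/λ_k < ∞` (the sequence is indexed by `ℕ`, with `λ_1` corresponding to `lam 0`):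
`∫₀^∞ (∑_k e^{-2λ_k s})^{α/2} ds ≤ ((2-α)/(α λ_1))^{(2-α)/2} (∑_k 1/λ_k)^{α/2}`;
in particular, the integral is finite. -/
theorem stmt10
    (α : ℝ) (hα0 : 0 < α) (hα2 : α < 2)
    (lam : ℕ → ℝ) (hpos : ∀ k, 0 < lam k) (hmono : Monotone lam)
    (hsum : Summable fun k => 1 / lam k) :
    (∫⁻ s in Set.Ioi (0 : ℝ),
        ENNReal.ofReal ((∑' k : ℕ, Real.exp (-(2 * lam k * s))) ^ (α / 2)))
      ≤ ENNReal.ofReal (((2 - α) / (α * lam 0)) ^ ((2 - α) / 2)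
          * (∑' k : ℕ, 1 / lam k) ^ (α / 2))
    ∧ (∫⁻ s in Set.Ioi (0 : ℝ),
        ENNReal.ofReal ((∑' k : ℕ, Real.exp (-(2 * lam k * s))) ^ (α / 2))) < ⊤ := by
  have key := lintegral_Ioi_tsum_exp_neg_rpow_le hsum (hpos 0) (fun k => hmono k.zero_le)
    (half_pos hα0) (by linarith : α / 2 < 1)
  have hexponent : 1 - α / 2 = (2 - α) / 2 := by ring
  have hconst : (1 - α / 2) / (α / 2 * lam 0) = (2 - α) / (α * lam 0) := by
    field_simp
  have hS : 0 ≤ ∑' k, 1 / lam k := tsum_nonneg fun k => (one_div_pos.mpr (hpos k)).le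
  have bound := key.trans_eq <| by
    rw [hconst, hexponent, ENNReal.ofReal_rpow_of_nonneg hS (half_pos hα0).le,
      ENNReal.ofReal_rpow_of_nonneg (div_pos (by linarith) (mul_pos hα0 (hpos 0))).le
        (by linarith), ← ENNReal.ofReal_mul (Real.rpow_nonneg hS _), mul_comm]
  exact ⟨bound, bound.trans_lt ENNReal.ofReal_lt_top⟩
end

section
/- Let d be a positive integer, let 0 < a ≤ b, let (c_k)_{k≥1} be a sequence of real numbers with c_k ∈ [a,b] for all k, set λ_k := c_k · k^{2/d}, and let α ∈ (0,2). Then ∫₀^∞ ( ∑_{k=1}^∞ e^{−2λ_k s} )^{α/2} ds < ∞ if and only if α·d < 4. -/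
open MeasureTheory Filter Topology
open scoped ENNReal

lemma aux_exp_neg_le (m : ℝ) (hm : 0 ≤ m) :
    ∃ C : ℝ, 0 < C ∧ ∀ x : ℝ, 0 < x → Real.exp (-x) ≤ C * x ^ (-m) := by
  refine ⟨max 1 (Nat.factorial (Nat.ceil m) : ℝ), lt_of_lt_of_le one_pos (le_max_left _ _), fun x hx => ?_⟩
  rcases le_or_gt x 1 with h1 | h1
  · have h2 : (1:ℝ) ≤ x ^ (-m) :=
      Real.one_le_rpow_of_pos_of_le_one_of_nonpos hx h1 (neg_nonpos.2 hm)
    calc Real.exp (-x) ≤ 1 := Real.exp_le_one_iff.2 (by linarith)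
    _ = 1 * 1 := by ring
    _ ≤ max 1 (Nat.factorial (Nat.ceil m) : ℝ) * x ^ (-m) := by
        apply mul_le_mul (le_max_left _ _) h2 zero_le_one
        positivity
  · set n := Nat.ceil m with hn
    have hx0 : (0:ℝ) < x := hx
    have hxm : (0:ℝ) < x ^ m := Real.rpow_pos_of_pos hx m
    have hxn : x ^ m ≤ x ^ (n:ℝ) :=
      Real.rpow_le_rpow_of_exponent_le h1.le (Nat.le_ceil m)
    rw [Real.rpow_natCast] at hxn
    have hfac : (0:ℝ) < (Nat.factorial n : ℝ) := by exact_mod_cast Nat.factorial_pos n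
    have h3 : x ^ n / (Nat.factorial n : ℝ) ≤ Real.exp x := Real.pow_div_factorial_le_exp x hx.le n
    have hxnpos : (0:ℝ) < x ^ n := pow_pos hx n
    have h4 : Real.exp (-x) ≤ (Nat.factorial n : ℝ) / x ^ m := by
      rw [Real.exp_neg]
      calc (Real.exp x)⁻¹ ≤ (x ^ n / (Nat.factorial n : ℝ))⁻¹ := by
            apply inv_anti₀ (by positivity) h3
      _ = (Nat.factorial n : ℝ) / x ^ n := by rw [inv_div]
      _ ≤ (Nat.factorial n : ℝ) / x ^ m := by
            apply div_le_div_of_nonneg_left hfac.le hxm hxn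
    calc Real.exp (-x) ≤ (Nat.factorial n : ℝ) / x ^ m := h4
    _ = (Nat.factorial n : ℝ) * x ^ (-m) := by rw [Real.rpow_neg hx.le, div_eq_mul_inv]
    _ ≤ max 1 (Nat.factorial n : ℝ) * x ^ (-m) := by
        apply mul_le_mul_of_nonneg_right (le_max_right _ _) (by positivity)

lemma aux_sum_le (d : ℕ) (hd : 0 < d) (m : ℝ) (hm : (d:ℝ) < 2 * m) :
    ∃ K : ℝ, 0 < K ∧ ∀ t : ℝ, 0 < t →
      Summable (fun k : ℕ => Real.exp (-(t * ((k:ℝ)+1) ^ ((2:ℝ)/d)))) ∧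
      (∑' k : ℕ, Real.exp (-(t * ((k:ℝ)+1) ^ ((2:ℝ)/d)))) ≤ K * t ^ (-m) := by
  have hd0 : (0:ℝ) < d := by exact_mod_cast hd
  have hm0 : 0 ≤ m := by nlinarith
  obtain ⟨C, hC, hCle⟩ := aux_exp_neg_le m hm0
  set q : ℝ := 2 * m / d with hqdef
  have hq : 1 < q := by rw [hqdef, lt_div_iff₀ hd0]; linarith
  have hZs : Summable (fun k : ℕ => ((k:ℝ)+1) ^ (-q)) := by
    have h1 : Summable (fun k : ℕ => 1 / ((k:ℝ)) ^ q) :=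
      Real.summable_one_div_nat_rpow.2 hq
    have h2 := (summable_nat_add_iff 1).2 h1
    apply h2.congr
    intro k
    push_cast
    rw [one_div, ← Real.rpow_neg (by positivity)]
  set Z : ℝ := ∑' k : ℕ, ((k:ℝ)+1) ^ (-q) with hZdef
  have hZpos : 0 < Z := by
    apply Summable.tsum_pos hZs (fun k => by positivity) 0
    positivity
  refine ⟨C * Z, by positivity, fun t ht => ?_⟩
  have hle : ∀ k : ℕ, Real.exp (-(t * ((k:ℝ)+1) ^ ((2:ℝ)/d)))
      ≤ (C * t ^ (-m)) * ((k:ℝ)+1) ^ (-q) := by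
    intro k
    have hk1 : (0:ℝ) < (k:ℝ)+1 := by positivity
    have hu : (0:ℝ) < ((k:ℝ)+1) ^ ((2:ℝ)/d) := Real.rpow_pos_of_pos hk1 _
    have hx : (0:ℝ) < t * ((k:ℝ)+1) ^ ((2:ℝ)/d) := by positivity
    calc Real.exp (-(t * ((k:ℝ)+1) ^ ((2:ℝ)/d)))
        ≤ C * (t * ((k:ℝ)+1) ^ ((2:ℝ)/d)) ^ (-m) := hCle _ hx
    _ = (C * t ^ (-m)) * ((k:ℝ)+1) ^ (-q) := by
        rw [Real.mul_rpow ht.le hu.le, ← Real.rpow_mul hk1.le]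
        have hqq : (2:ℝ)/d * (-m) = -q := by
          rw [hqdef]; field_simp
        rw [hqq]; ring
  have hsum : Summable (fun k : ℕ => Real.exp (-(t * ((k:ℝ)+1) ^ ((2:ℝ)/d)))) :=
    Summable.of_nonneg_of_le (fun k => (Real.exp_pos _).le) hle (hZs.mul_left _)
  refine ⟨hsum, ?_⟩
  calc (∑' k : ℕ, Real.exp (-(t * ((k:ℝ)+1) ^ ((2:ℝ)/d))))
      ≤ ∑' k : ℕ, (C * t ^ (-m)) * ((k:ℝ)+1) ^ (-q) :=
        Summable.tsum_le_tsum hle hsum (hZs.mul_left _)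
  _ = (C * t ^ (-m)) * Z := tsum_mul_left
  _ = (C * Z) * t ^ (-m) := by ring

set_option maxHeartbeats 1000000 in
/-- For eigenvalues satisfying Weyl's law `λ_k = c_k k^{2/d}` with `c_k ∈ [a,b]`
(indexed by `ℕ`, with `λ_{k+1}` corresponding to `c k * (k+1)^{2/d}`) and `α ∈ (0,2)`:
`∫₀^∞ (∑_k e^{-2λ_k s})^{α/2} ds < ∞` if and only if `α·d < 4`. -/
theorem stmt11
    (d : ℕ) (hd : 0 < d) (a b : ℝ) (ha : 0 < a) (hab : a ≤ b)
    (c : ℕ → ℝ) (hc : ∀ k, c k ∈ Set.Icc a b)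
    (α : ℝ) (hα0 : 0 < α) (hα2 : α < 2) :
    (∫⁻ s in Set.Ioi (0 : ℝ),
        ENNReal.ofReal ((∑' k : ℕ,
          Real.exp (-(2 * (c k * ((k : ℝ) + 1) ^ ((2 : ℝ) / d)) * s))) ^ (α / 2))) < ⊤
      ↔ α * d < 4 := by
  have hb : 0 < b := lt_of_lt_of_le ha hab
  have hd0 : (0:ℝ) < d := by exact_mod_cast hd
  constructor
  · -- finiteness implies α d < 4
    intro hI
    by_contra h4
    push_neg at h4
    -- h4 : 4 ≤ α * d
    obtain ⟨K', hK', hKle'⟩ := aux_sum_le d hd d (by linarith)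
    set s₀ : ℝ := (2*b)⁻¹ * (2:ℝ) ^ (-(2:ℝ)/d) with hs₀def
    have hs₀ : 0 < s₀ := by positivity
    set p : ℝ := (d:ℝ) * α / 4 with hpdef
    have hp1 : 1 ≤ p := by rw [hpdef]; nlinarith
    set c₀ : ℝ := ((Real.exp 1)⁻¹/2) ^ (α/2) * ((2*b) ^ (-(d:ℝ)/2)) ^ (α/2) with hc₀def
    have hc₀ : 0 < c₀ := by positivity
    have hptw : ∀ s ∈ Set.Ioo (0:ℝ) s₀,
        c₀ * s ^ (-p) ≤ (∑' k : ℕ,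
          Real.exp (-(2 * (c k * ((k:ℝ)+1) ^ ((2:ℝ)/d)) * s))) ^ (α/2) := by
      intro s hs
      obtain ⟨hs0, hss₀⟩ := hs
      have h2bs : (0:ℝ) < 2*b*s := by positivity
      set y : ℝ := (2*b*s) ^ (-(d:ℝ)/2) with hydef
      have hy0 : 0 < y := Real.rpow_pos_of_pos h2bs _
      have hy2 : 2 ≤ y := by
        have he : 2*b*s₀ = (2:ℝ) ^ (-(2:ℝ)/d) := by
          rw [hs₀def]; field_simp
        have h1 : 2*b*s ≤ (2:ℝ) ^ (-(2:ℝ)/d) := by nlinarith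
        have h2 : ((2:ℝ) ^ (-(2:ℝ)/d)) ^ (-(d:ℝ)/2) ≤ y :=
          Real.rpow_le_rpow_of_nonpos h2bs h1 (by
            apply div_nonpos_of_nonpos_of_nonneg <;> simp [hd0.le])
        calc (2:ℝ) = ((2:ℝ) ^ (-(2:ℝ)/d)) ^ (-(d:ℝ)/2) := by
              have he4 : (-(2:ℝ)/d) * (-(d:ℝ)/2) = 1 := by field_simp
              rw [← Real.rpow_mul (by norm_num : (0:ℝ) ≤ 2), he4, Real.rpow_one]
        _ ≤ y := h2
      set N : ℕ := ⌊y⌋₊ with hNdef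
      have hNy : (N:ℝ) ≤ y := Nat.floor_le hy0.le
      have hyN : y/2 ≤ (N:ℝ) := by
        have := Nat.lt_floor_add_one y
        linarith
      have hterm : ∀ k, k < N → Real.exp (-1)
          ≤ Real.exp (-(2 * (c k * ((k:ℝ)+1) ^ ((2:ℝ)/d)) * s)) := by
        intro k hk
        apply Real.exp_le_exp.2
        have hupos : (0:ℝ) < ((k:ℝ)+1) ^ ((2:ℝ)/d) := Real.rpow_pos_of_pos (by positivity) _
        have hk1 : (k:ℝ)+1 ≤ y := by
          have hkn : (k:ℝ)+1 ≤ (N:ℝ) := by exact_mod_cast Nat.succ_le_of_lt hk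
          linarith
        have hu : ((k:ℝ)+1) ^ ((2:ℝ)/d) ≤ (2*b*s)⁻¹ := by
          calc ((k:ℝ)+1) ^ ((2:ℝ)/d) ≤ y ^ ((2:ℝ)/d) :=
            Real.rpow_le_rpow (by positivity) hk1 (by positivity)
          _ = (2*b*s)⁻¹ := by
            rw [hydef, ← Real.rpow_mul h2bs.le]
            have he2 : (-(d:ℝ)/2) * ((2:ℝ)/d) = -1 := by field_simp
            rw [he2, Real.rpow_neg_one]
        have hck : c k ≤ b := (hc k).2
        have hcka : a ≤ c k := (hc k).1
        have hmain : 2 * (c k * ((k:ℝ)+1) ^ ((2:ℝ)/d)) * s ≤ 1 := by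
          calc 2 * (c k * ((k:ℝ)+1) ^ ((2:ℝ)/d)) * s
              ≤ 2 * (b * ((k:ℝ)+1) ^ ((2:ℝ)/d)) * s := by
                nlinarith [mul_nonneg (mul_nonneg (sub_nonneg.2 hck) hupos.le) hs0.le]
          _ = (2*b*s) * ((k:ℝ)+1) ^ ((2:ℝ)/d) := by ring
          _ ≤ (2*b*s) * (2*b*s)⁻¹ := mul_le_mul_of_nonneg_left hu h2bs.le
          _ = 1 := mul_inv_cancel₀ (ne_of_gt h2bs)
        linarith
      have hSum : Summable (fun k : ℕ =>
          Real.exp (-(2 * (c k * ((k:ℝ)+1) ^ ((2:ℝ)/d)) * s))) := by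
        apply Summable.of_nonneg_of_le (fun k => (Real.exp_pos _).le) ?_
          ((hKle' (a*s) (by positivity)).1)
        intro k
        apply Real.exp_le_exp.2
        have hupos : (0:ℝ) < ((k:ℝ)+1) ^ ((2:ℝ)/d) := Real.rpow_pos_of_pos (by positivity) _
        have hcka : a ≤ c k := (hc k).1
        nlinarith [mul_nonneg (mul_nonneg (by linarith : (0:ℝ) ≤ 2 * c k - a) hupos.le) hs0.le]
      have hlow : (Real.exp 1)⁻¹/2 * y ≤ ∑' k : ℕ,
          Real.exp (-(2 * (c k * ((k:ℝ)+1) ^ ((2:ℝ)/d)) * s)) := by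
        have hexp1 : Real.exp (-1) = (Real.exp 1)⁻¹ := Real.exp_neg 1
        have h5 := mul_le_mul_of_nonneg_left hyN
          (by positivity : (0:ℝ) ≤ (Real.exp 1)⁻¹)
        calc (Real.exp 1)⁻¹/2 * y ≤ (Real.exp 1)⁻¹ * (N:ℝ) := by linarith
        _ = ∑ k ∈ Finset.range N, Real.exp (-1) := by
            rw [Finset.sum_const, Finset.card_range, hexp1, nsmul_eq_mul]; ring
        _ ≤ ∑ k ∈ Finset.range N,
              Real.exp (-(2 * (c k * ((k:ℝ)+1) ^ ((2:ℝ)/d)) * s)) :=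
            Finset.sum_le_sum (fun k hk => hterm k (Finset.mem_range.1 hk))
        _ ≤ _ := Summable.sum_le_tsum _ (fun k _ => (Real.exp_pos _).le) hSum
      have hstep := Real.rpow_le_rpow (by positivity) hlow (by positivity : (0:ℝ) ≤ α/2)
      have hL : ((Real.exp 1)⁻¹/2 * y) ^ (α/2) = c₀ * s ^ (-p) := by
        have hy' : y = (2*b) ^ (-(d:ℝ)/2) * s ^ (-(d:ℝ)/2) := by
          rw [hydef, show 2*b*s = (2*b)*s by ring, Real.mul_rpow (by positivity) hs0.le]
        rw [hy', Real.mul_rpow (by positivity)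
              (by positivity : (0:ℝ) ≤ (2*b) ^ (-(d:ℝ)/2) * s ^ (-(d:ℝ)/2)),
            Real.mul_rpow (by positivity : (0:ℝ) ≤ (2*b) ^ (-(d:ℝ)/2))
              (Real.rpow_nonneg hs0.le _),
            ← Real.rpow_mul hs0.le]
        have he3 : (-(d:ℝ)/2) * (α/2) = -p := by rw [hpdef]; ring
        rw [he3, hc₀def]; ring
      linarith [hL ▸ hstep]
    have hle1 : (∫⁻ s in Set.Ioo (0:ℝ) s₀, ENNReal.ofReal (c₀ * s ^ (-p))) < ⊤ := by
      refine lt_of_le_of_lt ?_ hI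
      calc ∫⁻ s in Set.Ioo (0:ℝ) s₀, ENNReal.ofReal (c₀ * s ^ (-p))
          ≤ ∫⁻ s in Set.Ioo (0:ℝ) s₀, ENNReal.ofReal ((∑' k : ℕ,
              Real.exp (-(2 * (c k * ((k:ℝ)+1) ^ ((2:ℝ)/d)) * s))) ^ (α/2)) :=
            lintegral_mono_ae ((ae_restrict_iff' measurableSet_Ioo).2
              (ae_of_all _ fun s hs => ENNReal.ofReal_le_ofReal (hptw s hs)))
      _ ≤ _ := lintegral_mono' (Measure.restrict_mono Set.Ioo_subset_Ioi_self le_rfl) le_rfl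
    have hmeas : Measurable fun s : ℝ => c₀ * s ^ (-p) := by fun_prop
    have hint : IntegrableOn (fun s : ℝ => c₀ * s ^ (-p)) (Set.Ioo (0:ℝ) s₀) := by
      refine ⟨hmeas.aestronglyMeasurable, ?_⟩
      rw [hasFiniteIntegral_iff_ofReal ((ae_restrict_iff' measurableSet_Ioo).2
        (ae_of_all _ fun s hs => mul_nonneg hc₀.le (Real.rpow_nonneg hs.1.le _)))]
      exact hle1
    have hint2 : IntegrableOn (fun s : ℝ => s ^ (-p)) (Set.Ioo (0:ℝ) s₀) :=
      (integrable_const_mul_iff (isUnit_iff_ne_zero.2 (ne_of_gt hc₀)) _).1 hint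
    rw [intervalIntegral.integrableOn_Ioo_rpow_iff hs₀] at hint2
    linarith
  · -- α d < 4 implies finite
    intro h4
    set m : ℝ := ((d:ℝ)/2 + 2/α)/2 with hmdef
    have hda : (d:ℝ)/2 < 2/α := by
      rw [div_lt_div_iff₀ (by norm_num) hα0]
      nlinarith
    have hm1 : (d:ℝ) < 2*m := by rw [hmdef]; linarith
    have hmpos : 0 < m := by rw [hmdef]; positivity
    have hp1 : m * α < 2 := by
      have h2a : 2/α * α = 2 := div_mul_cancel₀ 2 (ne_of_gt hα0)
      nlinarith [mul_lt_mul_of_pos_right hda hα0]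
    obtain ⟨K, hK, hKle⟩ := aux_sum_le d hd m hm1
    set p : ℝ := m * α / 2 with hpdef
    set q : ℝ := a * α / 2 with hqdef
    have hq0 : 0 < q := by rw [hqdef]; positivity
    have hppos : 0 < p := by rw [hpdef]; positivity
    have hplt : p < 1 := by rw [hpdef]; linarith
    set D : ℝ := (K * a ^ (-m)) ^ (α/2) with hDdef
    have hptwise : ∀ s : ℝ, 0 < s →
        (∑' k : ℕ, Real.exp (-(2 * (c k * ((k:ℝ)+1) ^ ((2:ℝ)/d)) * s))) ^ (α/2)
          ≤ D * (s ^ (-p) * Real.exp (-q * s)) := by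
      intro s hs
      obtain ⟨hSum, hTs⟩ := hKle (a*s) (by positivity)
      have hterm : ∀ k : ℕ, Real.exp (-(2 * (c k * ((k:ℝ)+1) ^ ((2:ℝ)/d)) * s))
          ≤ Real.exp (-(a*s)) * Real.exp (-((a*s) * ((k:ℝ)+1) ^ ((2:ℝ)/d))) := by
        intro k
        rw [← Real.exp_add]
        apply Real.exp_le_exp.2
        have hu1 : (1:ℝ) ≤ ((k:ℝ)+1) ^ ((2:ℝ)/d) :=
          Real.one_le_rpow (by simp [Nat.cast_nonneg]) (by positivity)
        have hcka : a ≤ c k := (hc k).1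
        nlinarith [mul_nonneg (mul_nonneg (sub_nonneg.2 hcka)
            (by linarith : (0:ℝ) ≤ ((k:ℝ)+1) ^ ((2:ℝ)/d))) hs.le,
          mul_nonneg (mul_nonneg ha.le
            (by linarith : (0:ℝ) ≤ ((k:ℝ)+1) ^ ((2:ℝ)/d) - 1)) hs.le]
      have hsum2 : Summable (fun k : ℕ =>
          Real.exp (-(2 * (c k * ((k:ℝ)+1) ^ ((2:ℝ)/d)) * s))) :=
        Summable.of_nonneg_of_le (fun k => (Real.exp_pos _).le) hterm (hSum.mul_left _)
      have hT : (∑' k : ℕ, Real.exp (-(2 * (c k * ((k:ℝ)+1) ^ ((2:ℝ)/d)) * s)))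
          ≤ Real.exp (-(a*s)) * (K * (a*s) ^ (-m)) := by
        calc (∑' k : ℕ, Real.exp (-(2 * (c k * ((k:ℝ)+1) ^ ((2:ℝ)/d)) * s)))
            ≤ ∑' k : ℕ, Real.exp (-(a*s)) * Real.exp (-((a*s) * ((k:ℝ)+1) ^ ((2:ℝ)/d))) :=
              Summable.tsum_le_tsum hterm hsum2 (hSum.mul_left _)
        _ = Real.exp (-(a*s)) * ∑' k : ℕ, Real.exp (-((a*s) * ((k:ℝ)+1) ^ ((2:ℝ)/d))) :=
              tsum_mul_left
        _ ≤ Real.exp (-(a*s)) * (K * (a*s) ^ (-m)) :=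
              mul_le_mul_of_nonneg_left hTs (Real.exp_pos _).le
      have hTnn : 0 ≤ ∑' k : ℕ, Real.exp (-(2 * (c k * ((k:ℝ)+1) ^ ((2:ℝ)/d)) * s)) :=
        tsum_nonneg (fun k => (Real.exp_pos _).le)
      calc (∑' k : ℕ, Real.exp (-(2 * (c k * ((k:ℝ)+1) ^ ((2:ℝ)/d)) * s))) ^ (α/2)
          ≤ (Real.exp (-(a*s)) * (K * (a*s) ^ (-m))) ^ (α/2) :=
            Real.rpow_le_rpow hTnn hT (by positivity)
      _ = D * (s ^ (-p) * Real.exp (-q * s)) := by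
          have e1 : Real.exp (-(a*s)) ^ (α/2) = Real.exp (-q*s) := by
            rw [← Real.exp_mul]
            congr 1
            rw [hqdef]; ring
          have e2 : (K * (a*s) ^ (-m)) ^ (α/2) = (K * a ^ (-m)) ^ (α/2) * s ^ (-p) := by
            rw [Real.mul_rpow ha.le hs.le, ← mul_assoc,
              Real.mul_rpow (by positivity) (Real.rpow_nonneg hs.le _),
              ← Real.rpow_mul hs.le]
            congr 1
            rw [hpdef]; ring
          rw [Real.mul_rpow (Real.exp_pos _).le (by positivity), e1, e2, hDdef]
          ring
    have hInt : IntegrableOn (fun s : ℝ => D * (s ^ (-p) * Real.exp (-q * s)))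
        (Set.Ioi (0:ℝ)) := by
      apply Integrable.const_mul
      have hI1 : IntegrableOn (fun s : ℝ => s ^ (-p) * Real.exp (-q * s))
          (Set.Ioc (0:ℝ) 1) := by
        have hbase : IntegrableOn (fun s : ℝ => s ^ (-p)) (Set.Ioc (0:ℝ) 1) := by
          have h6 := intervalIntegral.intervalIntegrable_rpow' (a := (0:ℝ)) (b := 1)
            (by linarith : (-1:ℝ) < -p)
          rwa [intervalIntegrable_iff_integrableOn_Ioc_of_le zero_le_one] at h6
        apply Integrable.mono' hbase
          ((by fun_prop : Measurable fun s : ℝ =>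
            s ^ (-p) * Real.exp (-q * s)).aestronglyMeasurable)
        refine (ae_restrict_iff' measurableSet_Ioc).2 (ae_of_all _ fun s hs => ?_)
        have hs0 : 0 < s := hs.1
        rw [Real.norm_eq_abs, abs_of_nonneg (by positivity)]
        exact mul_le_of_le_one_right (Real.rpow_nonneg hs0.le _)
          (Real.exp_le_one_iff.2 (by nlinarith))
      have hI2 : IntegrableOn (fun s : ℝ => s ^ (-p) * Real.exp (-q * s))
          (Set.Ioi (1:ℝ)) := by
        apply Integrable.mono' (exp_neg_integrableOn_Ioi 1 hq0)
          ((by fun_prop : Measurable fun s : ℝ =>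
            s ^ (-p) * Real.exp (-q * s)).aestronglyMeasurable)
        refine (ae_restrict_iff' measurableSet_Ioi).2 (ae_of_all _ fun s hs => ?_)
        have hs1 : (1:ℝ) < s := hs
        have hs0 : (0:ℝ) < s := by linarith
        rw [Real.norm_eq_abs, abs_of_nonneg (by positivity)]
        have h7 : s ^ (-p) ≤ 1 :=
          Real.rpow_le_one_of_one_le_of_nonpos hs1.le (by linarith)
        calc s ^ (-p) * Real.exp (-q*s)
            ≤ 1 * Real.exp (-q*s) :=
              mul_le_mul_of_nonneg_right h7 (Real.exp_pos _).le
        _ = Real.exp (-q*s) := one_mul _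
      have h8 := hI1.union hI2
      rwa [Set.Ioc_union_Ioi_eq_Ioi zero_le_one] at h8
    calc (∫⁻ s in Set.Ioi (0 : ℝ),
        ENNReal.ofReal ((∑' k : ℕ,
          Real.exp (-(2 * (c k * ((k : ℝ) + 1) ^ ((2 : ℝ) / d)) * s))) ^ (α / 2)))
        ≤ ∫⁻ s in Set.Ioi (0 : ℝ),
            ENNReal.ofReal (D * (s ^ (-p) * Real.exp (-q * s))) :=
          setLIntegral_mono (by fun_prop)
            (fun s hs => ENNReal.ofReal_le_ofReal (hptwise s hs))
    _ < ⊤ := hInt.lintegral_lt_top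
end

section
/- Let V be a real separable Hilbert space with orthonormal basis (e_k)_{k≥1}, let (λ_k)_{k≥1} be a nondecreasing sequence of strictly positive real numbers with λ_k → ∞ and ∑_{k=1}^∞ 1/λ_k < ∞, and let μ be a σ-finite Borel measure on V with K₁ := sup_{‖v‖≤1} ∫_V ( ⟨u,v⟩² ∧ 1 ) μ(du) < ∞. Then the following two pairs of conditions are equivalent: [(c) sup_{n≥1} ∫₀^∞ ∫_V ( ( ∑_{k=1}^n e^{−2λ_k s} ⟨u,e_k⟩² ) ∧ 1 ) μ(du) ds < ∞ and (d) lim_{m→∞} sup_{n≥m} ∫₀^∞ ∫_V ( ( ∑_{k=m}^n e^{−2λ_k s} ⟨u,e_k⟩² ) ∧ 1 ) μ(du) ds = 0] if and only if [(i) sup_{n≥1} ∫_V max_{1≤k≤n} ( log⁺|⟨u,e_k⟩| / λ_k ) μ(du) < ∞ and (ii) lim_{m→∞} sup_{n≥m} ∫_V max_{m≤k≤n} ( log⁺|⟨u,e_k⟩| / λ_k ) μ(du) = 0]. -/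
/-!
Write `x_k = ⟪u, e_k⟫` and `t = max_{m ≤ k ≤ n} log⁺ |x_k| / λ_k`. For `s ∈ (0, t]` the term
`e^{-2 λ_k s} x_k²` of a maximising `k` is at least `1`, so the truncated time integral is
at least `t`. For `s > t` every term is at most `e^{-2 λ_k (s - t)} (x_k² ∧ 1)`, so the
integral is at most `t + ∑_{k=m}^n (x_k² ∧ 1) / (2 λ_k)`. Integrating in `u`, the error is
at most `K₁ ∑_{k ≥ m} 1 / (2 λ_k)`, which is finite and tends to `0`; hence the suprema over
`n` of both sides are finite together and tend to `0` together.
-/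

open MeasureTheory Filter Topology Set Real
open scoped RealInnerProductSpace ENNReal NNReal

lemma lintegral_Ioi_exp_neg_mul_sub {b : ℝ} (hb : 0 < b) (t : ℝ) :
    ∫⁻ s in Ioi t, ENNReal.ofReal (exp (-b * (s - t))) = ENNReal.ofReal b⁻¹ := by
  have hshift : ∀ s, exp (-b * (s - t)) = exp (b * t) * exp (-b * s) := fun s => by
    rw [← exp_add]; ring_nf
  simp_rw [hshift]
  rw [← ofReal_integral_eq_lintegral_ofReal
      (((integrableOn_exp_mul_Ioi (neg_neg_of_pos hb) t)).const_mul _)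
      (ae_of_all _ fun s => by positivity),
    integral_const_mul, integral_exp_mul_Ioi (neg_neg_of_pos hb), neg_div_neg_eq,
    mul_div_assoc', ← exp_add]
  simp

lemma one_le_exp_mul_sq_of_le_log {a x : ℝ} (ha : 0 < a) (h : a ≤ log (max |x| 1)) :
    1 ≤ exp (-(2 * a)) * x ^ 2 := by
  have hexp : exp a ≤ max |x| 1 := (le_log_iff_exp_le (by positivity)).mp h
  have habs : exp a ≤ |x| := by
    rcases max_cases |x| 1 with ⟨hm, _⟩ | ⟨hm, _⟩
    · rwa [hm] at hexp
    · linarith [one_lt_exp_iff.mpr ha]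
  calc 1 = exp (-(2 * a)) * exp a ^ 2 := by rw [← exp_nat_mul, ← exp_add]; ring_nf; simp
    _ ≤ exp (-(2 * a)) * x ^ 2 := by
      rw [← sq_abs x]
      gcongr

lemma max_sq_one_le_exp_of_log_le {l t x : ℝ} (h : log (max |x| 1) ≤ l * t) :
    max (x ^ 2) 1 ≤ exp (2 * l * t) := by
  have hmax : max |x| 1 ≤ exp (l * t) := (log_le_iff_le_exp (by positivity)).mp h
  have habs : |x| ≤ exp (l * t) := (le_max_left _ _).trans hmax
  have hone : 1 ≤ exp (l * t) := (le_max_right _ _).trans hmax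
  calc max (x ^ 2) 1 ≤ exp (l * t) ^ 2 := by
        refine max_le ?_ (one_le_pow₀ hone)
        rw [← sq_abs x]
        gcongr
    _ = exp (2 * l * t) := by rw [← exp_nat_mul]; ring_nf

lemma exp_mul_sq_le_of_log_le {l t s x : ℝ} (h : log (max |x| 1) ≤ l * t) :
    exp (-(2 * l * s)) * x ^ 2 ≤ exp (-(2 * l) * (s - t)) * min (x ^ 2) 1 := by
  calc exp (-(2 * l * s)) * x ^ 2 = exp (-(2 * l * s)) * (min (x ^ 2) 1 * max (x ^ 2) 1) := by
        rw [min_mul_max]; ring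
    _ ≤ exp (-(2 * l * s)) * (min (x ^ 2) 1 * exp (2 * l * t)) := by
        gcongr
        exact max_sq_one_le_exp_of_log_le h
    _ = exp (-(2 * l) * (s - t)) * min (x ^ 2) 1 := by
        rw [mul_comm (min _ _), ← mul_assoc, ← exp_add]; ring_nf

-- For `x k = ⟪u, e k⟫` the sum is `‖T(s) P u‖²`, `P` the projection onto `span {e m, …, e n}`.
noncomputable def truncOrbitIntegral (lam x : ℕ → ℝ) (m n : ℕ) : ℝ≥0∞ :=
  ∫⁻ s in Ioi 0,
    ENNReal.ofReal (min (∑ k ∈ Finset.Icc m n, exp (-(2 * lam k * s)) * x k ^ 2) 1)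

noncomputable def maxLogRatio (lam x : ℕ → ℝ) (m n : ℕ) : ℝ≥0 :=
  (Finset.Icc m n).sup fun k => (log (max |x k| 1) / lam k).toNNReal

section Pointwise

variable {lam : ℕ → ℝ} (x : ℕ → ℝ) (m n : ℕ)

lemma ofReal_log_div_le_truncOrbitIntegral {k : ℕ} (hk : k ∈ Finset.Icc m n)
    (hpos : 0 < lam k) :
    ENNReal.ofReal (log (max |x k| 1) / lam k) ≤ truncOrbitIntegral lam x m n := by
  set t := log (max |x k| 1) / lam k
  have hsat : ∀ s ∈ Ioc 0 t, 1 ≤ ENNReal.ofReal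
      (min (∑ j ∈ Finset.Icc m n, exp (-(2 * lam j * s)) * x j ^ 2) 1) := by
    intro s ⟨hs0, hst⟩
    have hlog : lam k * s ≤ log (max |x k| 1) := by
      rwa [le_div_iff₀ hpos, mul_comm] at hst
    have hterm := one_le_exp_mul_sq_of_le_log (mul_pos hpos hs0) hlog
    rw [← mul_assoc] at hterm
    have hsum := hterm.trans (Finset.single_le_sum
      (f := fun j => exp (-(2 * lam j * s)) * x j ^ 2) (fun j _ => by positivity) hk)
    simp [min_eq_right hsum]
  calc ENNReal.ofReal t = ∫⁻ _ in Ioc 0 t, 1 := by simp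
    _ ≤ ∫⁻ s in Ioc 0 t, ENNReal.ofReal
          (min (∑ j ∈ Finset.Icc m n, exp (-(2 * lam j * s)) * x j ^ 2) 1) :=
        setLIntegral_mono' measurableSet_Ioc hsat
    _ ≤ truncOrbitIntegral lam x m n := lintegral_mono_set Ioc_subset_Ioi_self

lemma maxLogRatio_le_truncOrbitIntegral (hpos : ∀ k, 0 < lam k) :
    (maxLogRatio lam x m n : ℝ≥0∞) ≤ truncOrbitIntegral lam x m n := by
  rw [maxLogRatio, ENNReal.coe_finset_sup]
  exact Finset.sup_le fun k hk => ofReal_log_div_le_truncOrbitIntegral x m n hk (hpos k)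

lemma truncOrbitIntegral_le (hpos : ∀ k, 0 < lam k) :
    truncOrbitIntegral lam x m n ≤ maxLogRatio lam x m n + ∑ k ∈ Finset.Icc m n,
      ENNReal.ofReal (2 * lam k)⁻¹ * ENNReal.ofReal (min (x k ^ 2) 1) := by
  set t : ℝ := (maxLogRatio lam x m n : ℝ)
  have hlog : ∀ k ∈ Finset.Icc m n, log (max |x k| 1) ≤ lam k * t := by
    intro k hk
    have h := (Real.le_coe_toNNReal _).trans (NNReal.coe_le_coe.mpr (Finset.le_sup
      (f := fun k => (log (max |x k| 1) / lam k).toNNReal) hk))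
    rwa [div_le_iff₀ (hpos k), mul_comm] at h
  have hdecay : ∀ s, ENNReal.ofReal (min (∑ k ∈ Finset.Icc m n,
      exp (-(2 * lam k * s)) * x k ^ 2) 1) ≤ ∑ k ∈ Finset.Icc m n,
        ENNReal.ofReal (exp (-(2 * lam k) * (s - t))) * ENNReal.ofReal (min (x k ^ 2) 1) := by
    intro s
    simp_rw [← ENNReal.ofReal_mul (exp_pos _).le]
    rw [← ENNReal.ofReal_sum_of_nonneg fun k _ => by positivity]
    exact ENNReal.ofReal_le_ofReal ((min_le_left _ _).trans
      (Finset.sum_le_sum fun k hk => exp_mul_sq_le_of_log_le (hlog k hk)))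
  calc truncOrbitIntegral lam x m n
      ≤ (∫⁻ s in Ioc 0 t, ENNReal.ofReal (min (∑ k ∈ Finset.Icc m n,
            exp (-(2 * lam k * s)) * x k ^ 2) 1)) + ∫⁻ s in Ioi t, ENNReal.ofReal
            (min (∑ k ∈ Finset.Icc m n, exp (-(2 * lam k * s)) * x k ^ 2) 1) :=
        (lintegral_mono_set Ioi_subset_Ioc_union_Ioi).trans (lintegral_union_le _ _ _)
    _ ≤ (∫⁻ _ in Ioc 0 t, 1) + ∫⁻ s in Ioi t, ∑ k ∈ Finset.Icc m n,
          ENNReal.ofReal (exp (-(2 * lam k) * (s - t))) *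
            ENNReal.ofReal (min (x k ^ 2) 1) := by
        gcongr with s s
        · exact ENNReal.ofReal_le_one.mpr (min_le_right _ _)
        · exact hdecay s
    _ = maxLogRatio lam x m n + ∑ k ∈ Finset.Icc m n,
          ENNReal.ofReal (2 * lam k)⁻¹ * ENNReal.ofReal (min (x k ^ 2) 1) := by
        rw [lintegral_finsetSum _ fun k _ => by fun_prop]
        congr 1
        · simp [t]
        · refine Finset.sum_congr rfl fun k _ => ?_
          rw [lintegral_mul_const _ (by fun_prop),
            lintegral_Ioi_exp_neg_mul_sub (by linarith [hpos k])]

end Pointwise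

lemma ENNReal.sum_Icc_le_tsum_add (f : ℕ → ℝ≥0∞) (m n : ℕ) :
    ∑ k ∈ Finset.Icc m n, f k ≤ ∑' j, f (j + m) := by
  rw [← Finset.Ico_add_one_right_eq_Icc, Finset.sum_Ico_eq_sum_range]
  simp_rw [add_comm m]
  exact ENNReal.sum_le_tsum _

lemma tsum_ofReal_inv_two_mul_add_ne_top {lam : ℕ → ℝ} (hpos : ∀ k, 0 < lam k)
    (hsum : Summable fun k => 1 / lam k) (m : ℕ) :
    ∑' j, ENNReal.ofReal (2 * lam (j + m))⁻¹ ≠ ∞ := by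
  have hsum2 : Summable fun k => (2 * lam k)⁻¹ :=
    (hsum.div_const 2).congr fun k => by field_simp
  refine ne_top_of_le_ne_top ?_ (ENNReal.tsum_comp_le_tsum_of_injective
    (add_left_injective m) fun k => ENNReal.ofReal (2 * lam k)⁻¹)
  rw [← ENNReal.ofReal_tsum_of_nonneg (fun k => by have := hpos k; positivity) hsum2]
  exact ENNReal.ofReal_ne_top

section Integrated

variable {Ω : Type*} [MeasurableSpace Ω] (μ : Measure Ω) {X : ℕ → Ω → ℝ}

lemma lintegral_lintegral_swap_truncOrbitIntegral [SFinite μ] (lam : ℕ → ℝ) (m n : ℕ)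
    (hX : ∀ k, Measurable (X k)) :
    ∫⁻ s in Ioi 0, ∫⁻ ω, ENNReal.ofReal
        (min (∑ k ∈ Finset.Icc m n, exp (-(2 * lam k * s)) * X k ω ^ 2) 1) ∂μ =
      ∫⁻ ω, truncOrbitIntegral lam (X · ω) m n ∂μ :=
  lintegral_lintegral_swap (by fun_prop)

lemma lintegral_truncOrbitIntegral_le {lam : ℕ → ℝ} (hpos : ∀ k, 0 < lam k) {K : ℝ≥0∞}
    (hK : ∀ k, ∫⁻ ω, ENNReal.ofReal (min (X k ω ^ 2) 1) ∂μ ≤ K) (hX : ∀ k, Measurable (X k))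
    (m n : ℕ) :
    ∫⁻ ω, truncOrbitIntegral lam (X · ω) m n ∂μ ≤
      ∫⁻ ω, (maxLogRatio lam (X · ω) m n : ℝ≥0∞) ∂μ +
        (∑' j, ENNReal.ofReal (2 * lam (j + m))⁻¹) * K := by
  calc ∫⁻ ω, truncOrbitIntegral lam (X · ω) m n ∂μ
      ≤ ∫⁻ ω, ((maxLogRatio lam (X · ω) m n : ℝ≥0∞) + ∑ k ∈ Finset.Icc m n,
          ENNReal.ofReal (2 * lam k)⁻¹ * ENNReal.ofReal (min (X k ω ^ 2) 1)) ∂μ :=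
        lintegral_mono fun ω => truncOrbitIntegral_le _ m n hpos
    _ = ∫⁻ ω, (maxLogRatio lam (X · ω) m n : ℝ≥0∞) ∂μ + ∑ k ∈ Finset.Icc m n,
          ENNReal.ofReal (2 * lam k)⁻¹ * ∫⁻ ω, ENNReal.ofReal (min (X k ω ^ 2) 1) ∂μ := by
        rw [lintegral_add_right _ (by fun_prop),
          lintegral_finsetSum _ fun k _ => by fun_prop]
        refine congrArg _ (Finset.sum_congr rfl fun k _ => lintegral_const_mul _ ?_)
        have := hX k
        fun_prop
    _ ≤ ∫⁻ ω, (maxLogRatio lam (X · ω) m n : ℝ≥0∞) ∂μ +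
          (∑' j, ENNReal.ofReal (2 * lam (j + m))⁻¹) * K := by
        gcongr
        calc ∑ k ∈ Finset.Icc m n, ENNReal.ofReal (2 * lam k)⁻¹ *
              ∫⁻ ω, ENNReal.ofReal (min (X k ω ^ 2) 1) ∂μ
            ≤ (∑ k ∈ Finset.Icc m n, ENNReal.ofReal (2 * lam k)⁻¹) * K := by
              rw [Finset.sum_mul]
              gcongr with k
              exact hK k
          _ ≤ (∑' j, ENNReal.ofReal (2 * lam (j + m))⁻¹) * K := by
              gcongr
              exact ENNReal.sum_Icc_le_tsum_add _ m n

end Integrated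

lemma iSup_lt_top_and_tendsto_iff_of_le_of_le {P L : ℕ → ℕ → ℝ≥0∞} {c : ℕ → ℝ≥0∞}
    (i : ℕ) (hLP : ∀ m n, L m n ≤ P m n) (hPL : ∀ m n, P m n ≤ L m n + c m) (hci : c i ≠ ∞)
    (hc : Tendsto c atTop (𝓝 0)) :
    ((⨆ n, P i n) < ∞ ∧ Tendsto (fun m => ⨆ n, P m n) atTop (𝓝 0)) ↔
      ((⨆ n, L i n) < ∞ ∧ Tendsto (fun m => ⨆ n, L m n) atTop (𝓝 0)) := by
  have hL : ∀ m, ⨆ n, L m n ≤ ⨆ n, P m n := fun m => iSup_mono (hLP m)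
  have hP : ∀ m, ⨆ n, P m n ≤ (⨆ n, L m n) + c m := fun m =>
    iSup_le fun n => (hPL m n).trans (add_le_add_left (le_iSup (L m) n) _)
  constructor
  · rintro ⟨hfin, hlim⟩
    exact ⟨(hL i).trans_lt hfin,
      tendsto_of_tendsto_of_tendsto_of_le_of_le tendsto_const_nhds hlim (fun _ => zero_le) hL⟩
  · rintro ⟨hfin, hlim⟩
    refine ⟨(hP i).trans_lt (ENNReal.add_lt_top.mpr ⟨hfin, hci.lt_top⟩), ?_⟩
    exact tendsto_of_tendsto_of_tendsto_of_le_of_le tendsto_const_nhds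
      (by simpa using hlim.add hc) (fun _ => zero_le) hP

theorem stmt12_general
    {V : Type*}
    [NormedAddCommGroup V] [InnerProductSpace ℝ V]
    [MeasurableSpace V] [BorelSpace V]
    (e : ℕ → V) (he : Orthonormal ℝ e)
    (lam : ℕ → ℝ) (hpos : ∀ k, 0 < lam k)
    (hsum : Summable fun k => 1 / lam k)
    (μ : Measure V) [SigmaFinite μ]
    (hK : (⨆ v ∈ Metric.closedBall (0 : V) 1,
        ∫⁻ u, ENNReal.ofReal (min (⟪u, v⟫ ^ 2) 1) ∂μ) < ⊤) :
    ((⨆ n : ℕ, ∫⁻ s in Set.Ioi (0 : ℝ), ∫⁻ u,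
          ENNReal.ofReal (min (∑ k ∈ Finset.Icc 1 n,
            Real.exp (-(2 * lam k * s)) * ⟪u, e k⟫ ^ 2) 1) ∂μ) < ⊤
      ∧ Tendsto (fun m : ℕ => ⨆ n : ℕ, ∫⁻ s in Set.Ioi (0 : ℝ), ∫⁻ u,
          ENNReal.ofReal (min (∑ k ∈ Finset.Icc m n,
            Real.exp (-(2 * lam k * s)) * ⟪u, e k⟫ ^ 2) 1) ∂μ) atTop (𝓝 0))
    ↔ ((⨆ n : ℕ, ∫⁻ u, (((Finset.Icc 1 n).sup fun k =>
          Real.toNNReal (Real.log (max |⟪u, e k⟫| 1) / lam k) : ℝ≥0) : ℝ≥0∞) ∂μ) < ⊤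
      ∧ Tendsto (fun m : ℕ => ⨆ n : ℕ, ∫⁻ u, (((Finset.Icc m n).sup fun k =>
          Real.toNNReal (Real.log (max |⟪u, e k⟫| 1) / lam k) : ℝ≥0) : ℝ≥0∞) ∂μ)
        atTop (𝓝 0)) := by
  have hX : ∀ k, Measurable fun u : V => ⟪u, e k⟫ := fun k => by fun_prop
  have hKe : ∀ k, ∫⁻ u, ENNReal.ofReal (min (⟪u, e k⟫ ^ 2) 1) ∂μ ≤
      ⨆ v ∈ Metric.closedBall (0 : V) 1, ∫⁻ u, ENNReal.ofReal (min (⟪u, v⟫ ^ 2) 1) ∂μ :=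
    fun k => le_iSup₂_of_le (e k) (by simp [he.1 k]) le_rfl
  have htail := ENNReal.tendsto_sum_nat_add (fun k => ENNReal.ofReal (2 * lam k)⁻¹)
    (by simpa using tsum_ofReal_inv_two_mul_add_ne_top hpos hsum 0)
  simp_rw [lintegral_lintegral_swap_truncOrbitIntegral μ lam _ _ hX]
  exact iSup_lt_top_and_tendsto_iff_of_le_of_le 1
    (P := fun m n => ∫⁻ u, truncOrbitIntegral lam (⟪u, e ·⟫) m n ∂μ)
    (L := fun m n => ∫⁻ u, (maxLogRatio lam (⟪u, e ·⟫) m n : ℝ≥0∞) ∂μ)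
    (fun m n => lintegral_mono fun u => maxLogRatio_le_truncOrbitIntegral _ m n hpos)
    (lintegral_truncOrbitIntegral_le μ hpos hKe hX)
    (ENNReal.mul_ne_top (tsum_ofReal_inv_two_mul_add_ne_top hpos hsum 1) hK.ne)
    (by simpa using ENNReal.Tendsto.mul_const htail (Or.inr hK.ne))

/-- For the semigroup `T(s)e_k = e^{-λ_k s} e_k` with `∑ 1/λ_k < ∞` and a σ-finite Borel
measure `μ` with `sup_{‖v‖≤1} ∫ (⟨u,v⟩² ∧ 1) μ(du) < ∞`, the Lévy-measure conditions (c), (d)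
hold if and only if the log-moment conditions (i), (ii) hold. -/
theorem stmt12
    {V : Type*}
    [NormedAddCommGroup V] [InnerProductSpace ℝ V] [CompleteSpace V] [SecondCountableTopology V]
    [MeasurableSpace V] [BorelSpace V]
    (e : ℕ → V) (he : Orthonormal ℝ e)
    (hbasis : (Submodule.span ℝ (Set.range e)).topologicalClosure = ⊤)
    (lam : ℕ → ℝ) (hpos : ∀ k, 0 < lam k) (hmono : Monotone lam)
    (hinf : Tendsto lam atTop atTop)
    (hsum : Summable fun k => 1 / lam k)
    (μ : Measure V) [SigmaFinite μ]
    (hK : (⨆ v ∈ Metric.closedBall (0 : V) 1,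
        ∫⁻ u, ENNReal.ofReal (min (⟪u, v⟫ ^ 2) 1) ∂μ) < ⊤) :
    ((⨆ n : ℕ, ∫⁻ s in Set.Ioi (0 : ℝ), ∫⁻ u,
          ENNReal.ofReal (min (∑ k ∈ Finset.Icc 1 n,
            Real.exp (-(2 * lam k * s)) * ⟪u, e k⟫ ^ 2) 1) ∂μ) < ⊤
      ∧ Tendsto (fun m : ℕ => ⨆ n : ℕ, ∫⁻ s in Set.Ioi (0 : ℝ), ∫⁻ u,
          ENNReal.ofReal (min (∑ k ∈ Finset.Icc m n,
            Real.exp (-(2 * lam k * s)) * ⟪u, e k⟫ ^ 2) 1) ∂μ) atTop (𝓝 0))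
    ↔ ((⨆ n : ℕ, ∫⁻ u, (((Finset.Icc 1 n).sup fun k =>
          Real.toNNReal (Real.log (max |⟪u, e k⟫| 1) / lam k) : ℝ≥0) : ℝ≥0∞) ∂μ) < ⊤
      ∧ Tendsto (fun m : ℕ => ⨆ n : ℕ, ∫⁻ u, (((Finset.Icc m n).sup fun k =>
          Real.toNNReal (Real.log (max |⟪u, e k⟫| 1) / lam k) : ℝ≥0) : ℝ≥0∞) ∂μ)
        atTop (𝓝 0)) :=
  stmt12_general e he lam hpos hsum μ hK
end

section
/- Let V be a real separable Hilbert space with orthonormal basis (e_k)_{k≥1}, let (λ_k)_{k≥1} be strictly positive real numbers, and let μ be a σ-finite Borel measure on V with K₁ := sup_{‖v‖≤1} ∫_V ( ⟨u,v⟩² ∧ 1 ) μ(du) < ∞. Then for all integers 1 ≤ m ≤ n: ∫₀^∞ ∫_V ( ( ∑_{k=m}^n e^{−2λ_k s} ⟨u,e_k⟩² ) ∧ 1 ) μ(du) ds ≤ (3K₁/2) ∑_{k=m}^n 1/λ_k + 2 ∫_V max_{m≤k≤n} ( log⁺|⟨u,e_k⟩| / λ_k ) μ(du). -/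
open MeasureTheory Filter Topology
open scoped RealInnerProductSpace ENNReal NNReal

/-!
Swap the two integrals and fix `u`. With `aₖ = ⟪u, eₖ⟫`, bound the integrand by `1` up to the time
`T(u) = maxₖ log⁺|aₖ| / λₖ`, and afterwards by the sum itself: past `T(u)` each term
`e^{-2λₖ s} aₖ²` is already below `aₖ² ∧ 1`, so its tail integrates to at most `(aₖ² ∧ 1) / (2λₖ)`.
Integrating in `u`, each `∫ (⟪u, eₖ⟫² ∧ 1) dμ` is at most `K₁` since `‖eₖ‖ = 1`.
-/

theorem lintegral_exp_mul_Ioi {a : ℝ} (ha : a < 0) (c : ℝ) :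
    ∫⁻ x in Set.Ioi c, ENNReal.ofReal (Real.exp (a * x))
      = ENNReal.ofReal (-Real.exp (a * c) / a) := by
  rw [← ofReal_integral_eq_lintegral_ofReal (integrableOn_exp_mul_Ioi ha c)
    (ae_of_all _ fun x => (Real.exp_pos _).le), integral_exp_mul_Ioi ha]

theorem lintegral_Ioi_min_one_le (f : ℝ → ℝ) {T : ℝ} (hT : 0 ≤ T) :
    ∫⁻ s in Set.Ioi 0, ENNReal.ofReal (min (f s) 1)
      ≤ ENNReal.ofReal T + ∫⁻ s in Set.Ioi T, ENNReal.ofReal (f s) := by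
  rw [← Set.Ioc_union_Ioi_eq_Ioi hT,
    lintegral_union measurableSet_Ioi (Set.Ioc_disjoint_Ioi le_rfl)]
  gcongr with s
  · calc ∫⁻ s in Set.Ioc 0 T, ENNReal.ofReal (min (f s) 1)
        ≤ ∫⁻ _ in Set.Ioc 0 T, 1 :=
          lintegral_mono fun s => ENNReal.ofReal_le_one.2 (min_le_right _ _)
      _ = ENNReal.ofReal T := by rw [setLIntegral_one, Real.volume_Ioc, sub_zero]
  · exact min_le_left _ _

theorem exp_neg_mul_mul_sq_le_min_one {a l t : ℝ} (hl : 0 < l)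
    (ht : Real.log (max |a| 1) / l ≤ t) :
    Real.exp (-(2 * l * t)) * a ^ 2 ≤ min (a ^ 2) 1 := by
  have hlog : Real.log (max |a| 1) ≤ l * t := by rwa [div_le_iff₀' hl] at ht
  rcases le_total |a| 1 with ha | ha
  · rw [max_eq_right ha, Real.log_one] at hlog
    rw [min_eq_left (by nlinarith [sq_abs a, abs_nonneg a])]
    exact mul_le_of_le_one_left (sq_nonneg a) (Real.exp_le_one_iff.2 (by linarith))
  · rw [max_eq_left ha] at hlog
    have ha0 : 0 < |a| := by linarith
    rw [min_eq_right (by nlinarith [sq_abs a])]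
    calc Real.exp (-(2 * l * t)) * a ^ 2
        = Real.exp (-(2 * l * t)) * Real.exp (Real.log |a|) ^ 2 := by rw [Real.exp_log ha0, sq_abs]
      _ = Real.exp (2 * (Real.log |a| - l * t)) := by
        rw [sq, ← Real.exp_add, ← Real.exp_add]; ring_nf
      _ ≤ 1 := Real.exp_le_one_iff.2 (by linarith)

theorem lintegral_Ioi_exp_neg_mul_mul_sq_le {a l t : ℝ} (hl : 0 < l)
    (ht : Real.log (max |a| 1) / l ≤ t) :
    ∫⁻ s in Set.Ioi t, ENNReal.ofReal (Real.exp (-(2 * l * s)) * a ^ 2)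
      ≤ ENNReal.ofReal (min (a ^ 2) 1 / (2 * l)) := by
  have h2l : -(2 * l) < 0 := by linarith
  have hexp : ∀ s, -(2 * l * s) = -(2 * l) * s := fun s => by ring
  simp_rw [ENNReal.ofReal_mul (Real.exp_pos _).le, hexp]
  rw [lintegral_mul_const' _ _ ENNReal.ofReal_ne_top, lintegral_exp_mul_Ioi h2l,
    ← ENNReal.ofReal_mul (div_nonneg_of_nonpos (neg_nonpos.2 (Real.exp_pos _).le) h2l.le)]
  refine ENNReal.ofReal_le_ofReal ?_
  calc -Real.exp (-(2 * l) * t) / -(2 * l) * a ^ 2 = Real.exp (-(2 * l * t)) * a ^ 2 / (2 * l) := by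
        rw [← hexp, neg_div_neg_eq, div_mul_eq_mul_div]
    _ ≤ _ := by gcongr; exact exp_neg_mul_mul_sq_le_min_one hl ht

theorem lintegral_Ioi_min_sum_exp_neg_mul_mul_sq_le {ι : Type*} (s : Finset ι) (a l : ι → ℝ)
    (hl : ∀ k ∈ s, 0 < l k) :
    ∫⁻ t in Set.Ioi 0, ENNReal.ofReal (min (∑ k ∈ s, Real.exp (-(2 * l k * t)) * a k ^ 2) 1)
      ≤ ((s.sup fun k => Real.toNNReal (Real.log (max |a k| 1) / l k) : ℝ≥0) : ℝ≥0∞)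
        + ∑ k ∈ s, ENNReal.ofReal (min (a k ^ 2) 1 / (2 * l k)) := by
  set T : ℝ≥0 := s.sup fun k => Real.toNNReal (Real.log (max |a k| 1) / l k)
  refine (lintegral_Ioi_min_one_le _ T.coe_nonneg).trans ?_
  rw [ENNReal.ofReal_coe_nnreal]
  gcongr
  have hT : ∀ k ∈ s, Real.log (max |a k| 1) / l k ≤ T := fun k hk =>
    (Real.le_coe_toNNReal _).trans (NNReal.coe_le_coe.2 (Finset.le_sup (f := fun k =>
      Real.toNNReal (Real.log (max |a k| 1) / l k)) hk))
  calc ∫⁻ t in Set.Ioi (T : ℝ), ENNReal.ofReal (∑ k ∈ s, Real.exp (-(2 * l k * t)) * a k ^ 2)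
      = ∑ k ∈ s, ∫⁻ t in Set.Ioi (T : ℝ), ENNReal.ofReal (Real.exp (-(2 * l k * t)) * a k ^ 2) := by
        have hsum : ∀ t : ℝ, ENNReal.ofReal (∑ k ∈ s, Real.exp (-(2 * l k * t)) * a k ^ 2)
            = ∑ k ∈ s, ENNReal.ofReal (Real.exp (-(2 * l k * t)) * a k ^ 2) := fun t =>
          ENNReal.ofReal_sum_of_nonneg fun k _ => by positivity
        simp_rw [hsum]
        exact lintegral_finsetSum _ fun k _ => by fun_prop
    _ ≤ _ := Finset.sum_le_sum fun k hk =>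
        lintegral_Ioi_exp_neg_mul_mul_sq_le (hl k hk) (hT k hk)

theorem lintegral_Ioi_lintegral_min_sum_exp_neg_mul_mul_sq_le {X ι : Type*} [MeasurableSpace X]
    (μ : Measure X) [SFinite μ] (s : Finset ι) (a : ι → X → ℝ) (ha : ∀ k, Measurable (a k))
    (l : ι → ℝ) (hl : ∀ k ∈ s, 0 < l k) :
    ∫⁻ t in Set.Ioi 0, ∫⁻ x,
        ENNReal.ofReal (min (∑ k ∈ s, Real.exp (-(2 * l k * t)) * a k x ^ 2) 1) ∂μ
      ≤ ∫⁻ x, ((s.sup fun k => Real.toNNReal (Real.log (max |a k x| 1) / l k) : ℝ≥0) : ℝ≥0∞) ∂μ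
        + ∑ k ∈ s,
            (∫⁻ x, ENNReal.ofReal (min (a k x ^ 2) 1) ∂μ) * ENNReal.ofReal (1 / (2 * l k)) := by
  have hmeas (k : ι) : Measurable fun x => ENNReal.ofReal (min (a k x ^ 2) 1) := by fun_prop
  have hsplit (k : ι) (x : X) : ENNReal.ofReal (min (a k x ^ 2) 1 / (2 * l k))
      = ENNReal.ofReal (min (a k x ^ 2) 1) * ENNReal.ofReal (1 / (2 * l k)) := by
    rw [← ENNReal.ofReal_mul (le_min (sq_nonneg _) zero_le_one), mul_one_div]
  rw [lintegral_lintegral_swap (by fun_prop)]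
  calc _ ≤ ∫⁻ x, (((s.sup fun k => Real.toNNReal (Real.log (max |a k x| 1) / l k) : ℝ≥0) : ℝ≥0∞)
          + ∑ k ∈ s, ENNReal.ofReal (min (a k x ^ 2) 1 / (2 * l k))) ∂μ :=
        lintegral_mono fun x => lintegral_Ioi_min_sum_exp_neg_mul_mul_sq_le s _ l hl
    _ = _ := by
        rw [lintegral_add_right _ (by fun_prop), lintegral_finsetSum _ fun k _ => by fun_prop]
        simp_rw [hsplit, fun k => lintegral_mul_const (μ := μ) (ENNReal.ofReal (1 / (2 * l k)))
          (hmeas k)]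

theorem stmt13_general
    {V : Type*}
    [NormedAddCommGroup V] [InnerProductSpace ℝ V]
    [MeasurableSpace V] [BorelSpace V]
    (e : ℕ → V) (he : Orthonormal ℝ e)
    (lam : ℕ → ℝ) (hpos : ∀ k, 0 < lam k)
    (μ : Measure V) [SigmaFinite μ]
    (K : ℝ≥0∞)
    (hK : K = ⨆ v ∈ Metric.closedBall (0 : V) 1,
        ∫⁻ u, ENNReal.ofReal (min (⟪u, v⟫ ^ 2) 1) ∂μ)
    (m n : ℕ) :
    (∫⁻ s in Set.Ioi (0 : ℝ), ∫⁻ u,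
        ENNReal.ofReal (min (∑ k ∈ Finset.Icc m n,
          Real.exp (-(2 * lam k * s)) * ⟪u, e k⟫ ^ 2) 1) ∂μ)
      ≤ 3 * K / 2 * ENNReal.ofReal (∑ k ∈ Finset.Icc m n, 1 / lam k)
        + 2 * ∫⁻ u, (((Finset.Icc m n).sup fun k =>
            Real.toNNReal (Real.log (max |⟪u, e k⟫| 1) / lam k) : ℝ≥0) : ℝ≥0∞) ∂μ := by
  have hK_ge (k : ℕ) : ∫⁻ u, ENNReal.ofReal (min (⟪u, e k⟫ ^ 2) 1) ∂μ ≤ K := by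
    rw [hK]
    exact le_biSup (fun v => ∫⁻ u, ENNReal.ofReal (min (⟪u, v⟫ ^ 2) 1) ∂μ) (by simp [he.1 k])
  refine (lintegral_Ioi_lintegral_min_sum_exp_neg_mul_mul_sq_le μ _ (fun k u => ⟪u, e k⟫)
    (fun k => by fun_prop) lam fun k _ => hpos k).trans ?_
  rw [add_comm]
  gcongr ?_ + ?_
  · calc _ ≤ ∑ k ∈ Finset.Icc m n, K * ENNReal.ofReal (1 / (2 * lam k)) := by
          gcongr with k
          exact hK_ge k
      _ = K * ENNReal.ofReal (∑ k ∈ Finset.Icc m n, 1 / (2 * lam k)) := by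
          rw [ENNReal.ofReal_sum_of_nonneg fun k _ => by have := hpos k; positivity,
            Finset.mul_sum]
      _ ≤ _ := by
          gcongr with k
          · rw [ENNReal.le_div_iff_mul_le (by norm_num) (by norm_num), mul_comm]
            gcongr
            norm_num
          · exact hpos k
          · linarith [hpos k]
  · exact le_mul_of_one_le_left zero_le one_le_two

/-- Quantitative bound: for `1 ≤ m ≤ n`,
`∫₀^∞ ∫ ((∑_{k=m}^n e^{-2λ_k s}⟨u,e_k⟩²) ∧ 1) μ(du) ds
  ≤ (3K₁/2) ∑_{k=m}^n 1/λ_k + 2 ∫ max_{m≤k≤n} log⁺|⟨u,e_k⟩|/λ_k μ(du)`. -/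
theorem stmt13
    {V : Type*}
    [NormedAddCommGroup V] [InnerProductSpace ℝ V] [CompleteSpace V] [SecondCountableTopology V]
    [MeasurableSpace V] [BorelSpace V]
    (e : ℕ → V) (he : Orthonormal ℝ e)
    (lam : ℕ → ℝ) (hpos : ∀ k, 0 < lam k)
    (μ : Measure V) [SigmaFinite μ]
    (K : ℝ≥0∞)
    (hK : K = ⨆ v ∈ Metric.closedBall (0 : V) 1,
        ∫⁻ u, ENNReal.ofReal (min (⟪u, v⟫ ^ 2) 1) ∂μ)
    (hKfin : K < ⊤)
    (m n : ℕ) (hm : 1 ≤ m) (hmn : m ≤ n) :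
    (∫⁻ s in Set.Ioi (0 : ℝ), ∫⁻ u,
        ENNReal.ofReal (min (∑ k ∈ Finset.Icc m n,
          Real.exp (-(2 * lam k * s)) * ⟪u, e k⟫ ^ 2) 1) ∂μ)
      ≤ 3 * K / 2 * ENNReal.ofReal (∑ k ∈ Finset.Icc m n, 1 / lam k)
        + 2 * ∫⁻ u, (((Finset.Icc m n).sup fun k =>
            Real.toNNReal (Real.log (max |⟪u, e k⟫| 1) / lam k) : ℝ≥0) : ℝ≥0∞) ∂μ :=
  stmt13_general e he lam hpos μ K hK m n
end

section
/- Let V be a real separable Hilbert space with orthonormal basis (e_k)_{k≥1}, let (λ_k)_{k≥1} be strictly positive real numbers, and let μ be a σ-finite Borel measure on V. Then for all integers 1 ≤ m ≤ n: ∫_V max_{m≤k≤n} ( log⁺|⟨u,e_k⟩| / λ_k ) μ(du) ≤ ∫₀^∞ ∫_V ( ( ∑_{k=m}^n e^{−2λ_k s} ⟨u,e_k⟩² ) ∧ 1 ) μ(du) ds, where both sides are allowed to take the value +∞. -/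
/-!
After exchanging the order of integration (Tonelli), it suffices to bound the maximum pointwise
in `u`. For each `k`, the `k`-th summand `e^{-2λ_k s}⟨u,e_k⟩²` alone is at least `1` for
`0 < s < log⁺|⟨u,e_k⟩| / λ_k`, so on that interval the truncated integrand equals `1`, and the
`s`-integral is at least its length.
-/

open MeasureTheory Filter Topology
open scoped RealInnerProductSpace ENNReal NNReal

open Set in
lemma ofReal_le_setLIntegral_Ioi_min_one {f : ℝ → ℝ} {T : ℝ} (hf : ∀ s ∈ Ioo 0 T, 1 ≤ f s) :
    ENNReal.ofReal T ≤ ∫⁻ s in Ioi 0, ENNReal.ofReal (min (f s) 1) :=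
  calc ENNReal.ofReal T = volume (Ioo 0 T) := by rw [Real.volume_Ioo, sub_zero]
    _ = ∫⁻ s in Ioo 0 T, ENNReal.ofReal (min (f s) 1) := by
      rw [← setLIntegral_one]
      refine setLIntegral_congr_fun measurableSet_Ioo fun s hs => ?_
      rw [min_eq_right (hf s hs), ENNReal.ofReal_one]
    _ ≤ ∫⁻ s in Ioi 0, ENNReal.ofReal (min (f s) 1) := lintegral_mono_set fun _ hs => hs.1

lemma one_le_exp_neg_two_mul_mul_sq {x l s : ℝ} (hl : 0 < l)
    (hs : s ∈ Set.Ioo 0 (Real.log (max |x| 1) / l)) :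
    1 ≤ Real.exp (-(2 * l * s)) * x ^ 2 := by
  have hls : 0 < l * s := mul_pos hl hs.1
  have hlog : l * s < Real.log (max |x| 1) := by
    have := hs.2
    rwa [lt_div_iff₀ hl, mul_comm] at this
  -- `log (max |x| 1) > 0` forces `1 < |x|`, so the truncation is inactive
  have hx : 1 < |x| := by
    by_contra! hx
    rw [max_eq_right hx, Real.log_one] at hlog
    linarith
  rw [max_eq_left hx.le, Real.lt_log_iff_exp_lt (by linarith)] at hlog
  have hsq : Real.exp (2 * l * s) ≤ x ^ 2 := by
    rw [← sq_abs, show 2 * l * s = l * s + l * s by ring, Real.exp_add, ← sq]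
    gcongr
  calc (1 : ℝ) = Real.exp (-(2 * l * s)) * Real.exp (2 * l * s) := by
        rw [← Real.exp_add, neg_add_cancel, Real.exp_zero]
    _ ≤ Real.exp (-(2 * l * s)) * x ^ 2 := by gcongr

lemma coe_finsetSup_log_div_le_setLIntegral {ι : Type*} (t : Finset ι) (a l : ι → ℝ)
    (hl : ∀ k ∈ t, 0 < l k) :
    ((t.sup fun k => Real.toNNReal (Real.log (max |a k| 1) / l k) : ℝ≥0) : ℝ≥0∞)
      ≤ ∫⁻ s in Set.Ioi 0,
          ENNReal.ofReal (min (∑ k ∈ t, Real.exp (-(2 * l k * s)) * a k ^ 2) 1) := by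
  rw [ENNReal.coe_finset_sup]
  refine Finset.sup_le fun k hk => ofReal_le_setLIntegral_Ioi_min_one fun s hs => ?_
  refine (one_le_exp_neg_two_mul_mul_sq (hl k hk) hs).trans ?_
  exact Finset.single_le_sum (f := fun j => Real.exp (-(2 * l j * s)) * a j ^ 2)
    (fun j _ => by positivity) hk

theorem stmt14_general
    {V : Type*}
    [NormedAddCommGroup V] [InnerProductSpace ℝ V]
    [MeasurableSpace V] [BorelSpace V]
    (e : ℕ → V)
    (lam : ℕ → ℝ) (hpos : ∀ k, 0 < lam k)
    (μ : Measure V) [SigmaFinite μ]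
    (m n : ℕ) :
    (∫⁻ u, (((Finset.Icc m n).sup fun k =>
        Real.toNNReal (Real.log (max |⟪u, e k⟫| 1) / lam k) : ℝ≥0) : ℝ≥0∞) ∂μ)
      ≤ ∫⁻ s in Set.Ioi (0 : ℝ), ∫⁻ u,
          ENNReal.ofReal (min (∑ k ∈ Finset.Icc m n,
            Real.exp (-(2 * lam k * s)) * ⟪u, e k⟫ ^ 2) 1) ∂μ := by
  have hmeas : Measurable fun p : ℝ × V => ENNReal.ofReal (min (∑ k ∈ Finset.Icc m n,
      Real.exp (-(2 * lam k * p.1)) * ⟪p.2, e k⟫ ^ 2) 1) := by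
    fun_prop
  rw [lintegral_lintegral_swap hmeas.aemeasurable]
  exact lintegral_mono fun u =>
    coe_finsetSup_log_div_le_setLIntegral _ (fun k => ⟪u, e k⟫) lam fun k _ => hpos k

/-- For `1 ≤ m ≤ n`,
`∫ max_{m≤k≤n} log⁺|⟨u,e_k⟩|/λ_k μ(du)
  ≤ ∫₀^∞ ∫ ((∑_{k=m}^n e^{-2λ_k s}⟨u,e_k⟩²) ∧ 1) μ(du) ds`,
where both sides may be `+∞`. -/
theorem stmt14
    {V : Type*}
    [NormedAddCommGroup V] [InnerProductSpace ℝ V] [CompleteSpace V] [SecondCountableTopology V]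
    [MeasurableSpace V] [BorelSpace V]
    (e : ℕ → V) (he : Orthonormal ℝ e)
    (lam : ℕ → ℝ) (hpos : ∀ k, 0 < lam k)
    (μ : Measure V) [SigmaFinite μ]
    (m n : ℕ) (hm : 1 ≤ m) (hmn : m ≤ n) :
    (∫⁻ u, (((Finset.Icc m n).sup fun k =>
        Real.toNNReal (Real.log (max |⟪u, e k⟫| 1) / lam k) : ℝ≥0) : ℝ≥0∞) ∂μ)
      ≤ ∫⁻ s in Set.Ioi (0 : ℝ), ∫⁻ u,
          ENNReal.ofReal (min (∑ k ∈ Finset.Icc m n,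
            Real.exp (-(2 * lam k * s)) * ⟪u, e k⟫ ^ 2) 1) ∂μ :=
  stmt14_general e lam hpos μ m n
end

section
/- Let λ > 0, σ ∈ ℝ, and let ρ be a σ-finite Borel measure on ℝ. Then ∫₀^∞ ∫_ℝ ( e^{−2λs} σ² β² ∧ 1 ) ρ(dβ) ds = (1/(2λ)) ∫_ℝ ( σ² β² ∧ 1 ) ρ(dβ) + (1/λ) ∫_ℝ log⁺|σβ| ρ(dβ), where both sides are allowed to take the value +∞. -/
open MeasureTheory Filter Topology
open scoped ENNReal

/-!
By Tonelli the claim reduces to a computation for each fixed `β`. Put `a = σ²β²` and `b = 2λ`.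
The integrand `min (e^{-bs} a) 1` equals `1` up to the time `s₀ = log⁺ a / b` at which
`e^{-bs} a` drops to `1` (so `s₀ = 0` when `a ≤ 1`), and equals `e^{-bs} a` afterwards.
The two pieces contribute `s₀` and `e^{-bs₀} a / b = min a 1 / b`, and
`log⁺ (σ²β²) = 2 log⁺ |σβ|` turns `s₀` into the logarithmic term.
-/

open Set Real

lemma lintegral_Ioi_ofReal_exp_neg_mul_s15 {b : ℝ} (hb : 0 < b) (c : ℝ) :
    ∫⁻ s in Ioi c, ENNReal.ofReal (exp (-b * s)) = ENNReal.ofReal (exp (-b * c) / b) := by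
  have hb' : -b < 0 := neg_lt_zero.mpr hb
  rw [← ofReal_integral_eq_lintegral_ofReal (integrableOn_exp_mul_Ioi hb' c)
    (ae_of_all _ fun _ => (exp_pos _).le), integral_exp_mul_Ioi hb' c, neg_div_neg_eq]

lemma mul_inv_max_one_eq_min (a : ℝ) : a * (max 1 a)⁻¹ = min a 1 := by
  rcases le_total a 1 with h | h
  · simp [h]
  · simp [h, (zero_lt_one.trans_le h).ne']

lemma one_le_exp_neg_mul_mul {a b s : ℝ} (ha : 0 ≤ a) (hb : 0 < b) (hs : 0 < s)
    (hs_le : s ≤ log⁺ a / b) : 1 ≤ exp (-b * s) * a := by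
  have ha1 : 1 < a := by
    have : log⁺ a ≠ 0 := (div_pos_iff_of_pos_right hb).mp (hs.trans_le hs_le) |>.ne'
    rwa [Ne, posLog_eq_zero_iff, not_le, abs_of_nonneg ha] at this
  have hbs : b * s ≤ log a := by
    rwa [← posLog_eq_log (by rw [abs_of_nonneg ha]; exact ha1.le), ← le_div_iff₀' hb]
  rw [neg_mul, exp_neg, inv_mul_eq_div, one_le_div (exp_pos _)]
  exact (exp_le_exp.mpr hbs).trans_eq (exp_log (zero_lt_one.trans ha1))

theorem lintegral_Ioi_min_exp_neg_mul_one {a b : ℝ} (ha : 0 ≤ a) (hb : 0 < b) :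
    ∫⁻ s in Ioi 0, ENNReal.ofReal (min (exp (-b * s) * a) 1)
      = ENNReal.ofReal ((min a 1 + log⁺ a) / b) := by
  set s₀ := log⁺ a / b
  have hs₀ : 0 ≤ s₀ := div_nonneg posLog_nonneg hb.le
  have hexp : exp (-b * s₀) = (max 1 a)⁻¹ := by
    rw [neg_mul, mul_div_cancel₀ _ hb.ne', exp_neg, posLog_eq_log_max_one ha,
      exp_log (lt_max_of_lt_left one_pos)]
  have head : EqOn (fun s => ENNReal.ofReal (min (exp (-b * s) * a) 1)) 1 (Ioc 0 s₀) := by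
    rintro s ⟨hs, hs_le⟩
    simp only [Pi.one_apply, min_eq_right (one_le_exp_neg_mul_mul ha hb hs hs_le),
      ENNReal.ofReal_one]
  have tail : EqOn (fun s => ENNReal.ofReal (min (exp (-b * s) * a) 1))
      (fun s => ENNReal.ofReal (exp (-b * s)) * ENNReal.ofReal a) (Ioi s₀) := by
    intro s hs
    have : exp (-b * s) * a ≤ 1 :=
      calc exp (-b * s) * a ≤ exp (-b * s₀) * a :=
            mul_le_mul_of_nonneg_right (exp_le_exp.mpr (by nlinarith [mem_Ioi.mp hs])) ha
        _ = min a 1 := by rw [hexp, mul_comm, mul_inv_max_one_eq_min a]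
        _ ≤ 1 := min_le_right _ _
    simp only [min_eq_left this, ENNReal.ofReal_mul (exp_pos _).le]
  calc ∫⁻ s in Ioi 0, ENNReal.ofReal (min (exp (-b * s) * a) 1)
      = (∫⁻ s in Ioc 0 s₀, ENNReal.ofReal (min (exp (-b * s) * a) 1))
        + ∫⁻ s in Ioi s₀, ENNReal.ofReal (min (exp (-b * s) * a) 1) := by
        rw [← lintegral_union measurableSet_Ioi (Ioc_disjoint_Ioi le_rfl),
          Ioc_union_Ioi_eq_Ioi hs₀]
    _ = ENNReal.ofReal s₀ + ENNReal.ofReal (min a 1 / b) := by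
        rw [setLIntegral_congr_fun measurableSet_Ioc head,
          setLIntegral_congr_fun measurableSet_Ioi tail, lintegral_mul_const _ (by fun_prop),
          lintegral_Ioi_ofReal_exp_neg_mul_s15 hb, ← ENNReal.ofReal_mul (by positivity), hexp]
        simp only [Pi.one_apply, setLIntegral_one, volume_Ioc, sub_zero]
        congr 2
        rw [← mul_inv_max_one_eq_min a]
        field_simp
    _ = ENNReal.ofReal ((min a 1 + log⁺ a) / b) := by
        rw [← ENNReal.ofReal_add hs₀ (div_nonneg (le_min ha zero_le_one) hb.le), add_comm,
          add_div]

theorem lintegral_Ioi_min_exp_mul_sq_one {l : ℝ} (hl : 0 < l) (c : ℝ) :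
    ∫⁻ s in Ioi 0, ENNReal.ofReal (min (exp (-(2 * l * s)) * c ^ 2) 1)
      = ENNReal.ofReal (1 / (2 * l)) * ENNReal.ofReal (min (c ^ 2) 1)
        + ENNReal.ofReal (1 / l) * ENNReal.ofReal (log (max |c| 1)) := by
  have hlog : log (max |c| 1) = log⁺ c := by
    rw [max_comm, ← posLog_eq_log_max_one (abs_nonneg c), posLog_abs]
  have h := lintegral_Ioi_min_exp_neg_mul_one (sq_nonneg c) (mul_pos two_pos hl)
  simp only [neg_mul] at h
  rw [h, hlog, posLog_pow, ← ENNReal.ofReal_mul (by positivity),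
    ← ENNReal.ofReal_mul (by positivity),
    ← ENNReal.ofReal_add (by positivity) (mul_nonneg (by positivity) posLog_nonneg)]
  congr 1
  field_simp
  push_cast
  ring

/-- For `λ > 0`, `σ ∈ ℝ` and a σ-finite Borel measure `ρ` on `ℝ`:
`∫₀^∞ ∫ (e^{-2λs}σ²β² ∧ 1) ρ(dβ) ds
  = (1/(2λ)) ∫ (σ²β² ∧ 1) ρ(dβ) + (1/λ) ∫ log⁺|σβ| ρ(dβ)`,
where both sides may be `+∞`. -/
theorem stmt15
    (l : ℝ) (hl : 0 < l) (σ : ℝ) (ρ : Measure ℝ) [SigmaFinite ρ] :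
    (∫⁻ s in Set.Ioi (0 : ℝ), ∫⁻ β,
        ENNReal.ofReal (min (Real.exp (-(2 * l * s)) * σ ^ 2 * β ^ 2) 1) ∂ρ)
      = ENNReal.ofReal (1 / (2 * l)) * (∫⁻ β, ENNReal.ofReal (min (σ ^ 2 * β ^ 2) 1) ∂ρ)
        + ENNReal.ofReal (1 / l) * (∫⁻ β, ENNReal.ofReal (Real.log (max |σ * β| 1)) ∂ρ) := by
  rw [lintegral_lintegral_swap (by fun_prop)]
  calc _ = ∫⁻ β, (ENNReal.ofReal (1 / (2 * l)) * ENNReal.ofReal (min (σ ^ 2 * β ^ 2) 1)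
          + ENNReal.ofReal (1 / l) * ENNReal.ofReal (log (max |σ * β| 1))) ∂ρ :=
        lintegral_congr fun β => by
          simpa only [mul_pow, mul_assoc] using lintegral_Ioi_min_exp_mul_sq_one hl (σ * β)
    _ = _ := by
        rw [lintegral_add_left (by fun_prop), lintegral_const_mul _ (by fun_prop),
          lintegral_const_mul _ (by fun_prop)]
end

section
/- Let α ∈ (0,2), let (λ_k)_{k≥1} be strictly positive real numbers, let (σ_k)_{k≥1} be real numbers, and let ρ be the Borel measure on ℝ with density β ↦ (1/2)|β|^{−1−α} with respect to Lebesgue measure (the Lévy measure of a symmetric α-stable process). Then ∑_{k=1}^∞ ∫₀^∞ ∫_ℝ ( e^{−2λ_k s} σ_k² β² ∧ 1 ) ρ(dβ) ds < ∞ if and only if ∑_{k=1}^∞ |σ_k|^α / λ_k < ∞. -/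
/-!
Scaling `β ↦ tβ` multiplies the symmetric `α`-stable Lévy measure `ρ` by `t ^ α`, so
`∫ (c²β² ∧ 1) dρ = |c| ^ α ∫ (β² ∧ 1) dρ`, and splitting at `|β| = 1` gives
`∫ (β² ∧ 1) dρ = 1 / (2 - α) + 1 / α`, finite and positive for `α ∈ (0, 2)`.
With `c = e^{-λ_k s} σ_k` the time integral is `∫₀^∞ e^{-α λ_k s} ds = 1 / (α λ_k)`, so the `k`-th
term of the series is `κ |σ_k| ^ α / λ_k` with `κ = (1 / (2 - α) + 1 / α) / α > 0`.
-/

open MeasureTheory Set Real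
open scoped ENNReal

theorem lintegral_comp_abs {f : ℝ → ℝ≥0∞} (hf : Measurable f) :
    ∫⁻ x, f |x| = 2 * ∫⁻ x in Ioi 0, f x := by
  have hIoi : ∫⁻ x in Ioi 0, f |x| = ∫⁻ x in Ioi 0, f x :=
    setLIntegral_congr_fun measurableSet_Ioi fun x hx => by rw [abs_of_pos hx]
  have hIic : ∫⁻ x in Iic 0, f |x| = ∫⁻ x in Ioi 0, f x := by
    conv_lhs => rw [← Measure.map_neg_eq_self (volume : Measure ℝ)]
    rw [setLIntegral_map measurableSet_Iic (by fun_prop) measurable_neg, neg_preimage, neg_Iic,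
      neg_zero, setLIntegral_congr Ioi_ae_eq_Ici.symm]
    simp_rw [abs_neg, hIoi]
  rw [← lintegral_add_compl _ measurableSet_Iic, compl_Iic, hIic, hIoi, two_mul]

theorem lintegral_exp_neg_mul_Ioi {b : ℝ} (hb : 0 < b) :
    ∫⁻ s in Ioi 0, ENNReal.ofReal (exp (-(b * s))) = ENNReal.ofReal (1 / b) := by
  have hint : IntegrableOn (fun s : ℝ => exp (-b * s)) (Ioi 0) :=
    integrableOn_exp_mul_Ioi (neg_lt_zero.2 hb) 0
  simp_rw [← neg_mul]
  rw [← ofReal_integral_eq_lintegral_ofReal hint (.of_forall fun _ => (exp_pos _).le),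
    integral_exp_mul_Ioi (neg_lt_zero.2 hb)]
  simp [neg_div]

theorem ENNReal.tsum_ofReal_lt_top_iff {ι : Type*} {f : ι → ℝ} (hf : ∀ i, 0 ≤ f i) :
    ∑' i, ENNReal.ofReal (f i) < ∞ ↔ Summable f := by
  refine ⟨fun h => ?_, Summable.tsum_ofReal_lt_top⟩
  lift f to ι → NNReal using hf
  simp_rw [ENNReal.ofReal_coe_nnreal] at h
  exact NNReal.summable_coe.2 (ENNReal.tsum_coe_ne_top_iff_summable.1 h.ne)

theorem lintegral_Ioi_rpow_mul_min_sq_one {α : ℝ} (hα0 : 0 < α) (hα2 : α < 2) :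
    ∫⁻ u in Ioi 0, ENNReal.ofReal (u ^ (-1 - α) * min (u ^ 2) 1)
      = ENNReal.ofReal (1 / (2 - α)) + ENNReal.ofReal (1 / α) := by
  have hnear : ∫⁻ u in Ioc 0 1, ENNReal.ofReal (u ^ (-1 - α) * min (u ^ 2) 1)
      = ENNReal.ofReal (1 / (2 - α)) := by
    have heq : EqOn (fun u : ℝ => u ^ (-1 - α) * min (u ^ 2) 1) (fun u => u ^ (1 - α))
        (Ioc 0 1) := by
      intro u ⟨hu0, hu1⟩
      beta_reduce
      rw [min_eq_left (pow_le_one₀ hu0.le hu1), ← rpow_natCast, ← rpow_add hu0]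
      congr 1
      push_cast
      ring
    have hint : IntegrableOn (fun u : ℝ => u ^ (1 - α)) (Ioc 0 1) :=
      (intervalIntegrable_iff_integrableOn_Ioc_of_le zero_le_one).1
        (intervalIntegral.intervalIntegrable_rpow' (by linarith))
    rw [setLIntegral_congr_fun measurableSet_Ioc fun u hu => congrArg ENNReal.ofReal (heq hu),
      ← ofReal_integral_eq_lintegral_ofReal hint
        ((ae_restrict_iff' measurableSet_Ioc).2 (.of_forall fun u hu => rpow_nonneg hu.1.le _)),
      ← intervalIntegral.integral_of_le zero_le_one, integral_rpow (.inl (by linarith)),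
      one_rpow, zero_rpow (by linarith), sub_zero]
    congr 1
    ring
  have hfar : ∫⁻ u in Ioi 1, ENNReal.ofReal (u ^ (-1 - α) * min (u ^ 2) 1)
      = ENNReal.ofReal (1 / α) := by
    have heq : EqOn (fun u : ℝ => u ^ (-1 - α) * min (u ^ 2) 1) (fun u => u ^ (-1 - α))
        (Ioi 1) :=
      fun u hu => by beta_reduce; rw [min_eq_right (one_le_pow₀ (le_of_lt hu)), mul_one]
    have hint := integrableOn_Ioi_rpow_of_lt (by linarith : -1 - α < -1) zero_lt_one
    rw [setLIntegral_congr_fun measurableSet_Ioi fun u hu => congrArg ENNReal.ofReal (heq hu),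
      ← ofReal_integral_eq_lintegral_ofReal hint ((ae_restrict_iff' measurableSet_Ioi).2
        (.of_forall fun u hu => rpow_nonneg (zero_le_one.trans (le_of_lt hu)) _)),
      integral_Ioi_rpow_of_lt (by linarith) zero_lt_one, one_rpow]
    congr 1
    ring
  rw [← Ioc_union_Ioi_eq_Ioi zero_le_one, lintegral_union measurableSet_Ioi Ioc_disjoint_Ioi_same,
    hnear, hfar]

noncomputable def symmStableLevyMeasure (α : ℝ) : Measure ℝ :=
  volume.withDensity fun β => ENNReal.ofReal (1 / 2 * |β| ^ (-1 - α))

namespace symmStableLevyMeasure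

theorem lintegral_eq (α : ℝ) {f : ℝ → ℝ≥0∞} (hf : Measurable f) :
    ∫⁻ β, f β ∂symmStableLevyMeasure α
      = ∫⁻ β, ENNReal.ofReal (1 / 2 * |β| ^ (-1 - α)) * f β := by
  rw [symmStableLevyMeasure, lintegral_withDensity_eq_lintegral_mul _ (by fun_prop) hf]
  rfl

theorem lintegral_comp_mul_left (α : ℝ) {f : ℝ → ℝ≥0∞} (hf : Measurable f) {t : ℝ}
    (ht : 0 < t) :
    ∫⁻ β, f (t * β) ∂symmStableLevyMeasure α
      = ENNReal.ofReal (t ^ α) * ∫⁻ β, f β ∂symmStableLevyMeasure α := by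
  set g : ℝ → ℝ≥0∞ := fun β => ENNReal.ofReal (1 / 2 * |β| ^ (-1 - α)) * f β
  have hdens (β : ℝ) : ENNReal.ofReal (1 / 2 * |β| ^ (-1 - α)) * f (t * β)
      = ENNReal.ofReal (t ^ (1 + α)) * g (t * β) := by
    have hpow : t ^ (1 + α) * t ^ (-1 - α) = 1 := by rw [← rpow_add ht]; norm_num
    have : t ^ (1 + α) * (1 / 2 * |t * β| ^ (-1 - α)) = 1 / 2 * |β| ^ (-1 - α) := by
      rw [abs_mul, abs_of_pos ht, mul_rpow ht.le (abs_nonneg _)]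
      linear_combination (1 / 2 * |β| ^ (-1 - α)) * hpow
    rw [← mul_assoc, ← ENNReal.ofReal_mul (by positivity), this]
  have hscale : ∫⁻ β, g (t * β) = ENNReal.ofReal t⁻¹ * ∫⁻ β, g β := by
    rw [← lintegral_map (by fun_prop) (measurable_const_mul t), map_volume_mul_left ht.ne',
      lintegral_smul_measure, smul_eq_mul, abs_of_pos (inv_pos.2 ht)]
  rw [lintegral_eq α (f := fun β => f (t * β)) (by fun_prop), lintegral_eq α hf]
  simp_rw [hdens]
  rw [lintegral_const_mul _ (by fun_prop), hscale, ← mul_assoc,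
    ← ENNReal.ofReal_mul (by positivity), ← rpow_neg_one, ← rpow_add ht, add_neg_cancel_comm]

theorem lintegral_min_sq_one {α : ℝ} (hα0 : 0 < α) (hα2 : α < 2) :
    ∫⁻ β, ENNReal.ofReal (min (β ^ 2) 1) ∂symmStableLevyMeasure α
      = ENNReal.ofReal (1 / (2 - α)) + ENNReal.ofReal (1 / α) := by
  have hdens (β : ℝ) :
      ENNReal.ofReal (1 / 2 * |β| ^ (-1 - α)) * ENNReal.ofReal (min (β ^ 2) 1)
        = ENNReal.ofReal (1 / 2) * ENNReal.ofReal (|β| ^ (-1 - α) * min (|β| ^ 2) 1) := by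
    rw [sq_abs, ← ENNReal.ofReal_mul (by positivity), ← ENNReal.ofReal_mul (by positivity),
      mul_assoc]
  rw [lintegral_eq α (by fun_prop)]
  simp_rw [hdens]
  rw [lintegral_const_mul _ (by fun_prop),
    lintegral_comp_abs (f := fun u => ENNReal.ofReal (u ^ (-1 - α) * min (u ^ 2) 1))
      (by fun_prop),
    lintegral_Ioi_rpow_mul_min_sq_one hα0 hα2, ← mul_assoc, ← ENNReal.ofReal_ofNat 2,
    ← ENNReal.ofReal_mul (by norm_num)]
  norm_num

theorem lintegral_min_mul_sq_one {α : ℝ} (hα : 0 < α) (c : ℝ) :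
    ∫⁻ β, ENNReal.ofReal (min (c ^ 2 * β ^ 2) 1) ∂symmStableLevyMeasure α
      = ENNReal.ofReal (|c| ^ α)
        * ∫⁻ β, ENNReal.ofReal (min (β ^ 2) 1) ∂symmStableLevyMeasure α := by
  rcases eq_or_ne c 0 with rfl | hc
  · simp [zero_rpow hα.ne']
  simp_rw [← sq_abs c, ← mul_pow]
  exact lintegral_comp_mul_left α (f := fun β => ENNReal.ofReal (min (β ^ 2) 1)) (by fun_prop)
    (abs_pos.2 hc)

theorem setLIntegral_Ioi_lintegral_min_exp_mul_sq_one {α : ℝ} (hα0 : 0 < α) (hα2 : α < 2)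
    {lam : ℝ} (hlam : 0 < lam) (σ : ℝ) :
    ∫⁻ s in Ioi 0, ∫⁻ β, ENNReal.ofReal (min (exp (-(2 * lam * s)) * σ ^ 2 * β ^ 2) 1)
        ∂symmStableLevyMeasure α
      = ENNReal.ofReal ((1 / (2 - α) + 1 / α) / α * (|σ| ^ α / lam)) := by
  have hinner (s : ℝ) :
      ∫⁻ β, ENNReal.ofReal (min (exp (-(2 * lam * s)) * σ ^ 2 * β ^ 2) 1)
          ∂symmStableLevyMeasure α
        = ENNReal.ofReal (exp (-(α * lam * s)))
          * ENNReal.ofReal (|σ| ^ α * (1 / (2 - α) + 1 / α)) := by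
    have hsq : exp (-(2 * lam * s)) * σ ^ 2 = (exp (-(lam * s)) * σ) ^ 2 := by
      rw [mul_pow, ← exp_nat_mul]
      ring_nf
    have hpow : |exp (-(lam * s)) * σ| ^ α = exp (-(α * lam * s)) * |σ| ^ α := by
      rw [abs_mul, abs_of_pos (exp_pos _), mul_rpow (exp_pos _).le (abs_nonneg _), ← exp_mul]
      ring_nf
    rw [hsq, lintegral_min_mul_sq_one hα0, lintegral_min_sq_one hα0 hα2, hpow,
      ← ENNReal.ofReal_add (by positivity) (by positivity), ← ENNReal.ofReal_mul (by positivity),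
      ← ENNReal.ofReal_mul (by positivity), mul_assoc]
  simp_rw [hinner]
  rw [lintegral_mul_const _ (by fun_prop), lintegral_exp_neg_mul_Ioi (by positivity),
    ← ENNReal.ofReal_mul (by positivity)]
  congr 1
  field_simp

end symmStableLevyMeasure

/-- For the symmetric `α`-stable Lévy measure `ρ(dβ) = (1/2)|β|^{-1-α} dβ`:
`∑_k ∫₀^∞ ∫ (e^{-2λ_k s}σ_k²β² ∧ 1) ρ(dβ) ds < ∞` if and only if
`∑_k |σ_k|^α/λ_k < ∞`. -/
theorem stmt16
    (α : ℝ) (hα0 : 0 < α) (hα2 : α < 2)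
    (lam : ℕ → ℝ) (hpos : ∀ k, 0 < lam k) (σ : ℕ → ℝ) :
    (∑' k : ℕ, ∫⁻ s in Set.Ioi (0 : ℝ), ∫⁻ β,
        ENNReal.ofReal (min (Real.exp (-(2 * lam k * s)) * (σ k) ^ 2 * β ^ 2) 1)
          ∂(volume.withDensity fun β : ℝ => ENNReal.ofReal (1 / 2 * |β| ^ (-1 - α)))) < ⊤
      ↔ Summable fun k => |σ k| ^ α / lam k := by
  have hκ : 0 < (1 / (2 - α) + 1 / α) / α := by
    have : 0 < 2 - α := by linarith
    positivity
  rw [← symmStableLevyMeasure]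
  simp_rw [symmStableLevyMeasure.setLIntegral_Ioi_lintegral_min_exp_mul_sq_one hα0 hα2 (hpos _)]
  rw [ENNReal.tsum_ofReal_lt_top_iff fun k =>
      mul_nonneg hκ.le (div_nonneg (rpow_nonneg (abs_nonneg _) _) (hpos k).le),
    summable_mul_left_iff hκ.ne']
end

section
/- Let λ > 0 and let ρ be a σ-finite Borel measure on ℝ. Then ∫₀^∞ e^{−λs} ( ∫_{\{β : 1 ≤ |β| ≤ e^{λs}\}} |β| ρ(dβ) ) ds = (1/λ) ρ( \{β : |β| ≥ 1\} ), where both sides are allowed to take the value +∞. -/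
/-! By Tonelli the order of integration can be swapped. For fixed `β` with `|β| ≥ 1` the
constraint `|β| ≤ e^{λs}` means `s ≥ log |β| / λ ≥ 0`, so the inner integral is
`|β| ∫_{log |β| / λ}^∞ e^{-λs} ds = |β| · 1 / (λ |β|) = 1 / λ`: the weight `|β|` is exactly
cancelled, and integrating the constant `1 / λ` over `{|β| ≥ 1}` gives the right-hand side. -/

open MeasureTheory Real Set
open scoped ENNReal

lemma lintegral_Ioi_exp_neg_mul {l : ℝ} (hl : 0 < l) (a : ℝ) :
    ∫⁻ s in Ioi a, ENNReal.ofReal (exp (-(l * s))) = ENNReal.ofReal (exp (-(l * a)) / l) := by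
  have hint : IntegrableOn (fun s => exp (-(l * s))) (Ioi a) := by
    simpa only [neg_mul] using exp_neg_integrableOn_Ioi a hl
  rw [← ofReal_integral_eq_lintegral_ofReal hint (.of_forall fun _ => (exp_pos _).le)]
  simp_rw [← neg_mul]
  rw [integral_exp_mul_Ioi (neg_neg_of_pos hl), neg_div_neg_eq]

lemma setOf_le_exp_mul_eq_Ici {l b : ℝ} (hl : 0 < l) (hb : 0 < b) :
    {s : ℝ | b ≤ exp (l * s)} = Ici (log b / l) := by
  ext s
  rw [mem_Ici, div_le_iff₀' hl, log_le_iff_le_exp hb]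
  rfl

lemma setLIntegral_exp_neg_mul_of_le_exp {l b : ℝ} (hl : 0 < l) (hb : 1 ≤ b) :
    ∫⁻ s in {s | b ≤ exp (l * s)} ∩ Ioi 0, ENNReal.ofReal (exp (-(l * s)))
      = ENNReal.ofReal (1 / (l * b)) := by
  have hb0 : 0 < b := one_pos.trans_le hb
  have ha : 0 ≤ log b / l := div_nonneg (log_nonneg hb) hl.le
  have hset : ({s | b ≤ exp (l * s)} ∩ Ioi 0 : Set ℝ) =ᵐ[volume] Ioi (log b / l) := by
    rw [setOf_le_exp_mul_eq_Ici hl hb0]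
    refine (Ioi_ae_eq_Ici.symm.inter (ae_eq_refl _)).trans ?_
    rw [Ioi_inter_Ioi, max_eq_left ha]
    rfl
  rw [setLIntegral_congr hset, lintegral_Ioi_exp_neg_mul hl, mul_div_cancel₀ _ hl.ne',
    exp_neg, exp_log hb0]
  congr 1
  field_simp

lemma lintegral_Ioi_exp_neg_mul_mul_indicator {l : ℝ} (hl : 0 < l) (b : ℝ) :
    ∫⁻ s in Ioi 0, ENNReal.ofReal (exp (-(l * s)))
        * {s | 1 ≤ b ∧ b ≤ exp (l * s)}.indicator (fun _ => ENNReal.ofReal b) s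
      = {b : ℝ | 1 ≤ b}.indicator (fun _ => ENNReal.ofReal (1 / l)) b := by
  by_cases hb : 1 ≤ b
  · have hmeas : MeasurableSet {s : ℝ | b ≤ exp (l * s)} :=
      measurableSet_le measurable_const (by fun_prop)
    simp only [hb, true_and]
    simp_rw [← indicator_mul_right _ (fun s => ENNReal.ofReal (exp (-(l * s))))]
    rw [lintegral_indicator hmeas, Measure.restrict_restrict hmeas,
      lintegral_mul_const _ (by fun_prop), setLIntegral_exp_neg_mul_of_le_exp hl hb,
      indicator_of_mem (show b ∈ {b : ℝ | 1 ≤ b} from hb), ← ENNReal.ofReal_mul (by positivity)]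
    congr 1
    field_simp
  · simp [hb]

/-- For `λ > 0` and a σ-finite Borel measure `ρ` on `ℝ`:
`∫₀^∞ e^{-λs} (∫_{1 ≤ |β| ≤ e^{λs}} |β| ρ(dβ)) ds = (1/λ) ρ({β : |β| ≥ 1})`,
where both sides may be `+∞`. -/
theorem stmt18
    (l : ℝ) (hl : 0 < l) (ρ : Measure ℝ) [SigmaFinite ρ] :
    (∫⁻ s in Set.Ioi (0 : ℝ), ENNReal.ofReal (Real.exp (-(l * s)))
        * ∫⁻ β in {β : ℝ | 1 ≤ |β| ∧ |β| ≤ Real.exp (l * s)}, ENNReal.ofReal |β| ∂ρ)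
      = ENNReal.ofReal (1 / l) * ρ {β : ℝ | 1 ≤ |β|} := by
  let T : Set (ℝ × ℝ) := {p | 1 ≤ |p.2| ∧ |p.2| ≤ exp (l * p.1)}
  have hT : MeasurableSet T :=
    (measurableSet_le measurable_const measurable_snd.abs).inter
      (measurableSet_le measurable_snd.abs (by fun_prop))
  let F : ℝ → ℝ → ℝ≥0∞ := fun s β =>
    ENNReal.ofReal (exp (-(l * s))) * T.indicator (fun p => ENNReal.ofReal |p.2|) (s, β)
  have hF : Measurable (Function.uncurry F) :=
    (by fun_prop : Measurable fun p : ℝ × ℝ => ENNReal.ofReal (exp (-(l * p.1)))).mul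
      ((by fun_prop : Measurable fun p : ℝ × ℝ => ENNReal.ofReal |p.2|).indicator hT)
  calc _ = ∫⁻ s in Ioi 0, ∫⁻ β, F s β ∂ρ := by
        refine lintegral_congr fun s => ?_
        have hS : MeasurableSet {β : ℝ | 1 ≤ |β| ∧ |β| ≤ exp (l * s)} :=
          measurable_prodMk_left hT
        rw [← lintegral_indicator hS, ← lintegral_const_mul _
          (measurable_abs.ennreal_ofReal.indicator hS)]
        rfl
    _ = ∫⁻ β, (∫⁻ s in Ioi 0, F s β) ∂ρ := lintegral_lintegral_swap hF.aemeasurable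
    _ = ∫⁻ β, {β : ℝ | 1 ≤ |β|}.indicator (fun _ => ENNReal.ofReal (1 / l)) β ∂ρ :=
      lintegral_congr fun β => lintegral_Ioi_exp_neg_mul_mul_indicator hl |β|
    _ = _ := lintegral_indicator_const (measurableSet_le measurable_const measurable_abs) _
end

section
/- Let (λ_k)_{k≥1} be strictly positive real numbers, (σ_k)_{k≥1} real numbers, and ρ a Borel measure on ℝ with ∫_ℝ ( β² ∧ 1 ) ρ(dβ) < ∞ (a Lévy measure on ℝ). Then ∑_{k=1}^∞ ∫₀^∞ ∫_ℝ ( e^{−2λ_k s} σ_k² β² ∧ 1 ) ρ(dβ) ds < ∞ if and only if both ∑_{k=1}^∞ (1/λ_k) ∫_ℝ log⁺|σ_k β| ρ(dβ) < ∞ and ∑_{k=1}^∞ (1/λ_k) ∫_ℝ ( σ_k² β² ∧ 1 ) ρ(dβ) < ∞. -/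
open MeasureTheory
open scoped ENNReal
open Set Real

/-!
For fixed `c ≥ 0` the decreasing map `s ↦ e^{-Ls} c` is `≥ 1` before `t = log⁺ c / L` and
`≤ 1` after it, so `∫₀^∞ (e^{-Ls} c ∧ 1) ds = t + (c ∧ 1) / L`. With `L = 2λ_k` and
`c = σ_k² β²` this is `(1/λ_k) log⁺|σ_k β| + (1/(2λ_k)) (σ_k² β² ∧ 1)`, and integrating in `β`
(Tonelli) turns the `k`-th term of the left-hand series into the sum of the two `k`-th terms on
the right, up to the factor `1/2`. Tonelli applies because all integrands vanish at `β = 0` and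
`ρ` is s-finite on `{0}ᶜ`, where `β² ∧ 1` is a positive `ρ`-integrable function.
-/

lemma exp_neg_mul_log_max_div_mul {L : ℝ} (hL : 0 < L) (c : ℝ) :
    exp (-(L * (log (max c 1) / L))) * c = min c 1 := by
  rw [mul_div_cancel₀ _ hL.ne', exp_neg, exp_log (by positivity)]
  rcases le_total c 1 with h | h
  · simp [h]
  · simp [h, (zero_lt_one.trans_le h).ne']

lemma lintegral_Ioi_min_exp_neg_mul_mul_one {L : ℝ} (hL : 0 < L) {c : ℝ} (hc : 0 ≤ c) :
    ∫⁻ s in Ioi 0, ENNReal.ofReal (min (exp (-(L * s)) * c) 1)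
      = ENNReal.ofReal (log (max c 1) / L) + ENNReal.ofReal (min c 1 / L) := by
  set t := log (max c 1) / L
  have ht : 0 ≤ t := div_nonneg (log_nonneg (le_max_right _ _)) hL.le
  have hexp : exp (-(L * t)) * c = min c 1 := exp_neg_mul_log_max_div_mul hL c
  have hanti : Antitone fun s => exp (-(L * s)) * c := fun a b hab =>
    mul_le_mul_of_nonneg_right (exp_le_exp.2 (by nlinarith)) hc
  have h_eq_one : EqOn (fun s => ENNReal.ofReal (min (exp (-(L * s)) * c) 1)) 1 (Ioc 0 t) := by
    rintro s ⟨hs0, hst⟩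
    have hc1 : 1 ≤ c := by
      by_contra! h
      have : t = 0 := by simp [t, max_eq_right h.le]
      linarith
    have : 1 ≤ exp (-(L * s)) * c := by
      calc 1 = exp (-(L * t)) * c := by rw [hexp, min_eq_right hc1]
        _ ≤ exp (-(L * s)) * c := hanti hst
    simp [min_eq_right this]
  have h_eq_exp : EqOn (fun s => ENNReal.ofReal (min (exp (-(L * s)) * c) 1))
      (fun s => ENNReal.ofReal (exp (-(L * s)) * c)) (Ioi t) := by
    intro s hs
    have : exp (-(L * s)) * c ≤ 1 := by
      calc exp (-(L * s)) * c ≤ exp (-(L * t)) * c := hanti (le_of_lt hs)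
        _ = min c 1 := hexp
        _ ≤ 1 := min_le_right _ _
    simp [min_eq_left this]
  have htail : ∫ s in Ioi t, exp (-(L * s)) * c = min c 1 / L := by
    have h := integral_comp_mul_left_Ioi (fun x => exp (-x)) t hL
    simp only [integral_exp_neg_Ioi, smul_eq_mul] at h
    rw [integral_mul_const, h, mul_assoc, hexp, inv_mul_eq_div]
  rw [← Ioc_union_Ioi_eq_Ioi ht, lintegral_union measurableSet_Ioi (Ioc_disjoint_Ioi le_rfl),
    setLIntegral_congr_fun measurableSet_Ioc h_eq_one,
    setLIntegral_congr_fun measurableSet_Ioi h_eq_exp,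
    ← htail, ofReal_integral_eq_lintegral_ofReal]
  · simp
  · simpa [neg_mul, IntegrableOn] using (exp_neg_integrableOn_Ioi t hL).mul_const c
  · filter_upwards with s using by positivity

lemma log_max_sq_one (x : ℝ) : log (max (x ^ 2) 1) = 2 * log (max |x| 1) := by
  rw [show 2 * log (max |x| 1) = log (max |x| 1 ^ 2) by simp [Real.log_pow]]
  congr 1
  rcases le_total |x| 1 with h | h <;> simp [h]

lemma lintegral_Ioi_min_exp_neg_two_mul_mul_sq {l : ℝ} (hl : 0 < l) (a β : ℝ) :
    ∫⁻ s in Ioi 0, ENNReal.ofReal (min (exp (-(2 * l * s)) * a ^ 2 * β ^ 2) 1)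
      = ENNReal.ofReal (1 / l) * ENNReal.ofReal (log (max |a * β| 1))
        + 2⁻¹ * (ENNReal.ofReal (1 / l) * ENNReal.ofReal (min (a ^ 2 * β ^ 2) 1)) := by
  simp_rw [mul_assoc (exp _)]
  rw [lintegral_Ioi_min_exp_neg_mul_mul_one (by positivity) (by positivity), ← mul_pow,
    log_max_sq_one, ← ENNReal.ofReal_mul (by positivity), ← ENNReal.ofReal_mul (by positivity),
    show (2 : ℝ≥0∞)⁻¹ = ENNReal.ofReal 2⁻¹ by simp, ← ENNReal.ofReal_mul (by positivity)]
  congr 2 <;> field_simp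

lemma lintegral_Ioi_lintegral_min_exp_neg_two_mul_mul_sq {l : ℝ} (hl : 0 < l) (a : ℝ)
    (ν : Measure ℝ) [SFinite ν] :
    ∫⁻ s in Ioi 0, ∫⁻ β, ENNReal.ofReal (min (exp (-(2 * l * s)) * a ^ 2 * β ^ 2) 1) ∂ν
      = ENNReal.ofReal (1 / l) * ∫⁻ β, ENNReal.ofReal (log (max |a * β| 1)) ∂ν
        + 2⁻¹ * (ENNReal.ofReal (1 / l) * ∫⁻ β, ENNReal.ofReal (min (a ^ 2 * β ^ 2) 1) ∂ν) := by
  rw [lintegral_lintegral_swap (by fun_prop)]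
  simp_rw [lintegral_Ioi_min_exp_neg_two_mul_mul_sq hl]
  rw [lintegral_add_left (by fun_prop), lintegral_const_mul _ (by fun_prop),
    lintegral_const_mul _ (by fun_prop), lintegral_const_mul _ (by fun_prop)]

lemma sFinite_restrict_of_lintegral_ne_top {α : Type*} [MeasurableSpace α] {μ : Measure α}
    {f : α → ℝ≥0∞} (hf : Measurable f) (hint : ∫⁻ x, f x ∂μ ≠ ∞) {s : Set α}
    (hs : MeasurableSet s) (hpos : ∀ x ∈ s, f x ≠ 0) : SFinite (μ.restrict s) := by
  -- `μ.restrict s` has density `f⁻¹` with respect to the finite measure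
  -- `(μ.restrict s).withDensity f`
  have : IsFiniteMeasure ((μ.restrict s).withDensity f) :=
    isFiniteMeasure_withDensity (ne_top_of_le_ne_top hint (setLIntegral_le_lintegral s f))
  rw [← withDensity_inv_same₀ hf.aemeasurable (ae_restrict_of_forall_mem hs hpos)
    (ae_restrict_of_ae ((ae_lt_top hf hint).mono fun _ => ne_of_lt))]
  infer_instance

lemma setLIntegral_compl_singleton_of_eq_zero {α : Type*} [MeasurableSpace α] {μ : Measure α}
    {f : α → ℝ≥0∞} {a : α} (ha : f a = 0) : ∫⁻ x in {a}ᶜ, f x ∂μ = ∫⁻ x, f x ∂μ :=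
  setLIntegral_eq_of_support_subset fun x hx hxa => hx (by rwa [mem_singleton_iff.1 hxa])

/-- For strictly positive `(λ_k)`, reals `(σ_k)` and a Lévy measure `ρ` on `ℝ`
(i.e. `∫ (β² ∧ 1) ρ(dβ) < ∞`):
`∑_k ∫₀^∞ ∫ (e^{-2λ_k s}σ_k²β² ∧ 1) ρ(dβ) ds < ∞` if and only if both
`∑_k (1/λ_k) ∫ log⁺|σ_k β| ρ(dβ) < ∞` and `∑_k (1/λ_k) ∫ (σ_k²β² ∧ 1) ρ(dβ) < ∞`. -/
theorem stmt19
    (lam : ℕ → ℝ) (hpos : ∀ k, 0 < lam k) (σ : ℕ → ℝ)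
    (ρ : Measure ℝ) (hρ : (∫⁻ β, ENNReal.ofReal (min (β ^ 2) 1) ∂ρ) < ⊤) :
    (∑' k : ℕ, ∫⁻ s in Set.Ioi (0 : ℝ), ∫⁻ β,
        ENNReal.ofReal (min (Real.exp (-(2 * lam k * s)) * (σ k) ^ 2 * β ^ 2) 1) ∂ρ) < ⊤
      ↔ ((∑' k : ℕ, ENNReal.ofReal (1 / lam k)
            * ∫⁻ β, ENNReal.ofReal (Real.log (max |σ k * β| 1)) ∂ρ) < ⊤
        ∧ (∑' k : ℕ, ENNReal.ofReal (1 / lam k)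
            * ∫⁻ β, ENNReal.ofReal (min ((σ k) ^ 2 * β ^ 2) 1) ∂ρ) < ⊤) := by
  have : SFinite (ρ.restrict {0}ᶜ) :=
    sFinite_restrict_of_lintegral_ne_top (by fun_prop) hρ.ne (measurableSet_singleton 0).compl
      fun β hβ => by simpa using hβ
  have key (k : ℕ) := lintegral_Ioi_lintegral_min_exp_neg_two_mul_mul_sq (hpos k) (σ k)
    (ρ.restrict {0}ᶜ)
  simp (disch := simp) only [setLIntegral_compl_singleton_of_eq_zero] at key
  rw [tsum_congr key, ENNReal.tsum_add, ENNReal.tsum_mul_left, ENNReal.add_lt_top]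
  exact and_congr_right' (by simp [lt_top_iff_ne_top, ENNReal.mul_eq_top])
end
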